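/- arXiv:1002.1859 — 16 statements merged into one kernel-verified Lean document; each statement's English description precedes it below -/
import Mathlib

section
/- Let A and M be real N×N matrices with M invertible, and suppose M + Mᵀ − A is invertible. Define M̄ := M (M + Mᵀ − A)⁻¹ Mᵀ. Then M̄ is invertible, M̄⁻¹ = M⁻¹ + M⁻ᵀ − M⁻ᵀ A M⁻¹, and I − M̄⁻¹ A = (I − M⁻ᵀ A)(I − M⁻¹ A). -/
/-! Inverting `M (M + Mᵀ - A)⁻¹ Mᵀ` reverses the product, and `M⁻ᵀ (M + Mᵀ - A) M⁻¹` expands to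
`M⁻¹ + M⁻ᵀ - M⁻ᵀ A M⁻¹`; the factorization of `1 - M̄⁻¹ A` is then an identity in any ring. -/

open Matrix

namespace Matrix

variable {n R : Type*} [Fintype n] [DecidableEq n] [CommRing R]

theorem isUnit_det_mul_inv_mul_transpose {M S : Matrix n n R} (hM : IsUnit M.det)
    (hS : IsUnit S.det) : IsUnit (M * S⁻¹ * Mᵀ).det := by
  rw [det_mul, det_mul, det_nonsing_inv, det_transpose]
  exact (hM.mul hS.ringInverse).mul hM

theorem inv_mul_inv_mul_transpose {M S : Matrix n n R} (hS : IsUnit S.det) :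
    (M * S⁻¹ * Mᵀ)⁻¹ = Mᵀ⁻¹ * S * M⁻¹ := by
  rw [mul_inv_rev, mul_inv_rev, nonsing_inv_nonsing_inv _ hS, Matrix.mul_assoc]

theorem inv_mul_add_sub_mul_inv {A B C : Matrix n n R} (hB : IsUnit B.det) (hC : IsUnit C.det) :
    C⁻¹ * (B + C - A) * B⁻¹ = B⁻¹ + C⁻¹ - C⁻¹ * A * B⁻¹ := by
  rw [Matrix.mul_sub, Matrix.mul_add, Matrix.sub_mul, Matrix.add_mul, nonsing_inv_mul _ hC,
    Matrix.one_mul, Matrix.mul_assoc, mul_nonsing_inv _ hB, Matrix.mul_one, add_comm]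

end Matrix

theorem one_sub_mul_mul_one_sub_mul {R : Type*} [Ring R] (a x y : R) :
    (1 - y * a) * (1 - x * a) = 1 - (x + y - y * a * x) * a := by
  noncomm_ring

theorem amli_symmetrization_identity (N : ℕ) (A M : Matrix (Fin N) (Fin N) ℝ)
    (hM : IsUnit M.det) (hS : IsUnit (M + Mᵀ - A).det)
    (Mbar : Matrix (Fin N) (Fin N) ℝ) (hMbar : Mbar = M * (M + Mᵀ - A)⁻¹ * Mᵀ) :
    IsUnit Mbar.det ∧
    Mbar⁻¹ = M⁻¹ + Mᵀ⁻¹ - Mᵀ⁻¹ * A * M⁻¹ ∧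
    1 - Mbar⁻¹ * A = (1 - Mᵀ⁻¹ * A) * (1 - M⁻¹ * A) := by
  subst hMbar
  have hMbar_inv : (M * (M + Mᵀ - A)⁻¹ * Mᵀ)⁻¹ = M⁻¹ + Mᵀ⁻¹ - Mᵀ⁻¹ * A * M⁻¹ := by
    rw [inv_mul_inv_mul_transpose hS, inv_mul_add_sub_mul_inv hM (by rwa [det_transpose])]
  refine ⟨isUnit_det_mul_inv_mul_transpose hM hS, hMbar_inv, ?_⟩
  rw [hMbar_inv, one_sub_mul_mul_one_sub_mul]
end

section
/- Let A be a real N×N matrix, P a real N×N_H matrix, and B_H an invertible N_H×N_H matrix, and set A_H := Pᵀ A P. Then for every real polynomial q, the identity P · q(B_H⁻¹ A_H) · B_H⁻¹ Pᵀ A = q(P B_H⁻¹ Pᵀ A) · P B_H⁻¹ Pᵀ A holds. -/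
open Matrix Polynomial

theorem polynomial_commutation_identity (N NH : ℕ)
    (A : Matrix (Fin N) (Fin N) ℝ)
    (P : Matrix (Fin N) (Fin NH) ℝ)
    (BH : Matrix (Fin NH) (Fin NH) ℝ) (hBH : IsUnit BH.det)
    (AH : Matrix (Fin NH) (Fin NH) ℝ) (hAH : AH = Pᵀ * A * P)
    (q : Polynomial ℝ) :
    P * (aeval (BH⁻¹ * AH) q) * BH⁻¹ * Pᵀ * A =
      (aeval (P * BH⁻¹ * Pᵀ * A) q) * (P * BH⁻¹ * Pᵀ * A) := by
  set X := BH⁻¹ * AH with hX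
  set Y := P * BH⁻¹ * Pᵀ * A with hY
  have hcomm : P * X = Y * P := by
    rw [hX, hY, hAH]; simp only [Matrix.mul_assoc]
  have hpow : ∀ n : ℕ, P * X ^ n = Y ^ n * P := by
    intro n
    induction n with
    | zero => simp
    | succ n ih =>
        rw [pow_succ, ← Matrix.mul_assoc, ih, Matrix.mul_assoc, hcomm,
          ← Matrix.mul_assoc, ← pow_succ]
  have key : ∀ r : Polynomial ℝ, P * aeval X r = aeval Y r * P := by
    intro r
    induction r using Polynomial.induction_on' with
    | add p q hp hq => simp only [map_add, Matrix.mul_add, Matrix.add_mul, hp, hq]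
    | monomial n a =>
        simp [aeval_monomial, Algebra.algebraMap_eq_smul_one, smul_mul_assoc,
          mul_smul_comm, hpow]
  calc P * aeval X q * BH⁻¹ * Pᵀ * A = (P * aeval X q) * (BH⁻¹ * Pᵀ * A) := by
        simp only [Matrix.mul_assoc]
    _ = (aeval Y q * P) * (BH⁻¹ * Pᵀ * A) := by rw [key]
    _ = aeval Y q * Y := by rw [hY]; simp only [Matrix.mul_assoc]
end

section
/- Let A, M be real N×N matrices with M invertible, P a real N×N_H matrix, B_H an invertible N_H×N_H matrix, and A_H := Pᵀ A P. Fix ν ≥ 1 and a real polynomial q_{ν−1} of degree at most ν−1, and set p_ν(x) := 1 − q_{ν−1}(x)·x and p̃_ν(x) := p_ν(1−x). Define M̄⁻¹ := M⁻¹ + M⁻ᵀ − M⁻ᵀ A M⁻¹, B_{H,ν}⁻¹ := q_{ν−1}(B_H⁻¹ A_H) B_H⁻¹, B⁻¹ := M̄⁻¹ + (I − M⁻ᵀ A) P B_{H,ν}⁻¹ Pᵀ (I − A M⁻¹), and E_H := I − P B_H⁻¹ Pᵀ A. Then I − B⁻¹ A = (I − M⁻ᵀ A) · p̃_ν(E_H)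 · (I − M⁻¹ A). -/
/-!
Write `G := P B_H⁻¹ Pᵀ` and `Q := q_{ν-1}(G A)`. Since `P (B_H⁻¹ Pᵀ A P)^k = (P B_H⁻¹ Pᵀ A)^k P`,
the coarse correction `P B_{H,ν}⁻¹ Pᵀ` equals `Q G`, and `p̃_ν(E_H) = p_ν(G A) = 1 - Q G A`.
What remains is the noncommutative identity
`1 - (M̄⁻¹ + (1 - M⁻ᵀ A) C (1 - A M⁻¹)) A = (1 - M⁻ᵀ A)(1 - C A)(1 - M⁻¹ A)` with `C = Q G`.
-/

open Matrix Polynomial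

namespace Matrix

variable {m n R : Type*} [Fintype m] [Fintype n] [DecidableEq m] [DecidableEq n] [CommSemiring R]

theorem mul_pow_mul_comm (X : Matrix m n R) (Y : Matrix n m R) (k : ℕ) :
    X * (Y * X) ^ k = (X * Y) ^ k * X := by
  induction k with
  | zero => simp
  | succ k ih => rw [pow_succ, pow_succ, ← Matrix.mul_assoc, ih, Matrix.mul_assoc,
      ← Matrix.mul_assoc X Y X, ← Matrix.mul_assoc]

theorem mul_aeval_mul_comm (X : Matrix m n R) (Y : Matrix n m R) (q : R[X]) :
    X * aeval (Y * X) q = aeval (X * Y) q * X := by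
  induction q using Polynomial.induction_on' with
  | add p r hp hr => rw [map_add, map_add, Matrix.mul_add, Matrix.add_mul, hp, hr]
  | monomial k a =>
    simp only [aeval_monomial, Algebra.algebraMap_eq_smul_one, smul_mul_assoc, one_mul,
      Matrix.mul_smul, Matrix.smul_mul, mul_pow_mul_comm]

end Matrix

theorem Polynomial.aeval_one_sub_comp_one_sub_mul_X {R S : Type*} [CommRing R] [Ring S]
    [Algebra R S] (q : R[X]) (x : S) :
    aeval (1 - x) ((1 - q * X).comp (1 - X)) = 1 - aeval x q * x := by
  simp [aeval_comp]

theorem two_level_error_factorization {S : Type*} [Ring S] (A Mi Mt C : S) :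
    1 - (Mi + Mt - Mt * A * Mi + (1 - Mt * A) * C * (1 - A * Mi)) * A
      = (1 - Mt * A) * (1 - C * A) * (1 - Mi * A) := by
  noncomm_ring

theorem amli_error_propagation_general (N NH : ℕ)
    (A M : Matrix (Fin N) (Fin N) ℝ)
    (P : Matrix (Fin N) (Fin NH) ℝ)
    (BH : Matrix (Fin NH) (Fin NH) ℝ)
    (AH : Matrix (Fin NH) (Fin NH) ℝ) (hAH : AH = Pᵀ * A * P)
    (qpoly : Polynomial ℝ)
    (pν ptildeν : Polynomial ℝ)
    (hp : pν = 1 - qpoly * X)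
    (hptilde : ptildeν = pν.comp (1 - X))
    (MbarInv : Matrix (Fin N) (Fin N) ℝ)
    (hMbarInv : MbarInv = M⁻¹ + Mᵀ⁻¹ - Mᵀ⁻¹ * A * M⁻¹)
    (BHνInv : Matrix (Fin NH) (Fin NH) ℝ)
    (hBHνInv : BHνInv = (aeval (BH⁻¹ * AH) qpoly) * BH⁻¹)
    (BInv : Matrix (Fin N) (Fin N) ℝ)
    (hBInv : BInv = MbarInv + (1 - Mᵀ⁻¹ * A) * P * BHνInv * Pᵀ * (1 - A * M⁻¹))
    (EH : Matrix (Fin N) (Fin N) ℝ)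
    (hEH : EH = 1 - P * BH⁻¹ * Pᵀ * A) :
    1 - BInv * A = (1 - Mᵀ⁻¹ * A) * (aeval EH ptildeν) * (1 - M⁻¹ * A) := by
  set G := P * BH⁻¹ * Pᵀ
  set Q := aeval (G * A) qpoly
  have hcoarse : P * BHνInv * Pᵀ = Q * G := by
    have := mul_aeval_mul_comm P (BH⁻¹ * Pᵀ * A) qpoly
    rw [hBHνInv, hAH]
    simp only [G, Q, Matrix.mul_assoc] at this ⊢
    rw [← Matrix.mul_assoc P, this, Matrix.mul_assoc]
  have hB : BInv = MbarInv + (1 - Mᵀ⁻¹ * A) * (Q * G) * (1 - A * M⁻¹) := by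
    rw [hBInv, ← hcoarse]
    simp only [Matrix.mul_assoc]
  have hsmooth : aeval EH ptildeν = 1 - Q * G * A := by
    rw [hEH, hptilde, hp, aeval_one_sub_comp_one_sub_mul_X, Matrix.mul_assoc Q]
  rw [hB, hMbarInv, hsmooth]
  exact two_level_error_factorization A M⁻¹ Mᵀ⁻¹ (Q * G)

theorem amli_error_propagation (N NH : ℕ)
    (A M : Matrix (Fin N) (Fin N) ℝ) (hM : IsUnit M.det)
    (P : Matrix (Fin N) (Fin NH) ℝ)
    (BH : Matrix (Fin NH) (Fin NH) ℝ) (hBH : IsUnit BH.det)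
    (AH : Matrix (Fin NH) (Fin NH) ℝ) (hAH : AH = Pᵀ * A * P)
    (ν : ℕ) (hν : 1 ≤ ν)
    (qpoly : Polynomial ℝ) (hdeg : qpoly.natDegree ≤ ν - 1)
    (pν ptildeν : Polynomial ℝ)
    (hp : pν = 1 - qpoly * X)
    (hptilde : ptildeν = pν.comp (1 - X))
    (MbarInv : Matrix (Fin N) (Fin N) ℝ)
    (hMbarInv : MbarInv = M⁻¹ + Mᵀ⁻¹ - Mᵀ⁻¹ * A * M⁻¹)
    (BHνInv : Matrix (Fin NH) (Fin NH) ℝ)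
    (hBHνInv : BHνInv = (aeval (BH⁻¹ * AH) qpoly) * BH⁻¹)
    (BInv : Matrix (Fin N) (Fin N) ℝ)
    (hBInv : BInv = MbarInv + (1 - Mᵀ⁻¹ * A) * P * BHνInv * Pᵀ * (1 - A * M⁻¹))
    (EH : Matrix (Fin N) (Fin N) ℝ)
    (hEH : EH = 1 - P * BH⁻¹ * Pᵀ * A) :
    1 - BInv * A = (1 - Mᵀ⁻¹ * A) * (aeval EH ptildeν) * (1 - M⁻¹ * A) :=
  amli_error_propagation_general N NH A M P BH AH hAH qpoly pν ptildeν hp hptilde MbarInv hMbarInv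
    BHνInv hBHνInv BInv hBInv EH hEH
end

section
/- Let A and B be real symmetric positive definite n×n matrices and let 0 < ρ̂₀ ≤ ρ̂₁ be such that ρ̂₀ vᵀAv ≤ vᵀBv ≤ ρ̂₁ vᵀAv for all vectors v. Let q be a real polynomial, set r₀ := min over x ∈ [1/ρ̂₁, 1/ρ̂₀] of x·q(x) and r₁ := max over x ∈ [1/ρ̂₁, 1/ρ̂₀] of x·q(x). Then for every vector y, r₀ · yᵀA⁻¹y ≤ yᵀ B⁻¹ q(A B⁻¹) y ≤ r₁ · yᵀA⁻¹y. -/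
/-!
Factor `A = Cᵀ C` with `C` invertible and substitute `y = Cᵀ w`. Then `yᵀ A⁻¹ y = wᵀ w`, and since
`Cᵀ` intertwines `M := C B⁻¹ Cᵀ` with `A B⁻¹ = Cᵀ (C B⁻¹)`, also
`yᵀ B⁻¹ q(A B⁻¹) y = wᵀ M q(M) w`. The symmetric matrix `M` is the inverse of the congruent copy
`C⁻ᵀ B C⁻¹` of `B`, whose spectrum lies in `[ρ̂₀, ρ̂₁]` by the hypothesis on `B`; hence the spectrum
of `M` lies in `[1/ρ̂₁, 1/ρ̂₀]`, and the Rayleigh quotient of `M q(M)` is bounded by the extreme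
values of `x q(x)` there.
-/

open Matrix Polynomial

theorem SemiconjBy.aeval {R A : Type*} [CommSemiring R] [Semiring A] [Algebra R A] {a x y : A}
    (h : SemiconjBy a x y) (p : R[X]) : SemiconjBy a (aeval x p) (aeval y p) := by
  induction p using Polynomial.induction_on' with
  | add p q hp hq => simpa only [map_add] using hp.add_right hq
  | monomial k c =>
    simp only [aeval_monomial]
    exact SemiconjBy.mul_right (Algebra.commutes c a).symm (h.pow_right k)

theorem Polynomial.aeval_mul_X_mul {R A : Type*} [CommSemiring R] [Semiring A] [Algebra R A]
    (a d : A) (q : R[X]) : aeval (a * d) (X * q) = a * aeval (d * a) q * d := by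
  have h : SemiconjBy d (a * d) (d * a) := (mul_assoc d a d).symm
  rw [map_mul, aeval_X, mul_assoc, (h.aeval q).eq, ← mul_assoc]

theorem spectrum.inv_subset_Icc {R A : Type*} [Field R] [LinearOrder R] [IsStrictOrderedRing R]
    [Ring A] [Algebra R A] (u : Aˣ) {a b : R} (ha : 0 < a)
    (h : spectrum R (u : A) ⊆ Set.Icc a b) : spectrum R (↑u⁻¹ : A) ⊆ Set.Icc b⁻¹ a⁻¹ := by
  intro x hx
  obtain ⟨hax, hxb⟩ := h (spectrum.inv₀_mem_iff.mpr hx)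
  have hx : 0 < x := inv_pos.mp (ha.trans_le hax)
  exact ⟨inv_le_of_inv_le₀ hx hxb, le_inv_of_le_inv₀ ha hax⟩

namespace Matrix

variable {ι : Type*} [Fintype ι]

theorem mulVec_dotProduct_mulVec_mulVec {R : Type*} [CommSemiring R] (D M : Matrix ι ι R)
    (w : ι → R) : (D *ᵥ w) ⬝ᵥ (M *ᵥ (D *ᵥ w)) = w ⬝ᵥ ((Dᵀ * M * D) *ᵥ w) := by
  rw [← mulVec_mulVec, ← mulVec_mulVec, dotProduct_mulVec w, vecMul_transpose]

section MatrixOrder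

open scoped MatrixOrder

theorem le_iff_forall_dotProduct_mulVec_le {M N : Matrix ι ι ℝ} (hM : M.IsHermitian)
    (hN : N.IsHermitian) : M ≤ N ↔ ∀ v, v ⬝ᵥ (M *ᵥ v) ≤ v ⬝ᵥ (N *ᵥ v) := by
  simp only [le_iff, posSemidef_iff_dotProduct_mulVec, hN.sub hM, true_and, star_trivial,
    sub_mulVec, dotProduct_sub, sub_nonneg]

variable [DecidableEq ι]

theorem PosDef.exists_eq_transpose_mul_self {A : Matrix ι ι ℝ} (hA : A.PosDef) :
    ∃ C : Matrix ι ι ℝ, IsUnit C ∧ A = Cᵀ * C := by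
  simpa only [star_eq_conjTranspose, conjTranspose_eq_transpose_of_trivial] using
    CStarAlgebra.isStrictlyPositive_iff_eq_star_mul_self.mp hA.isStrictlyPositive

theorem dotProduct_algebraMap_mulVec (r : ℝ) (v : ι → ℝ) :
    v ⬝ᵥ (algebraMap ℝ (Matrix ι ι ℝ) r *ᵥ v) = r * (v ⬝ᵥ v) := by
  rw [Algebra.algebraMap_eq_smul_one, smul_mulVec, one_mulVec, dotProduct_smul, smul_eq_mul]

theorem IsHermitian.spectrum_subset_Icc_iff {M : Matrix ι ι ℝ} (hM : M.IsHermitian) {a b : ℝ} :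
    spectrum ℝ M ⊆ Set.Icc a b ↔
      ∀ v, v ⬝ᵥ (M *ᵥ v) ∈ Set.Icc (a * (v ⬝ᵥ v)) (b * (v ⬝ᵥ v)) := by
  have hr (r : ℝ) : (algebraMap ℝ (Matrix ι ι ℝ) r).IsHermitian :=
    IsSelfAdjoint.algebraMap _ (IsSelfAdjoint.all r)
  have hLoewner : spectrum ℝ M ⊆ Set.Icc a b ↔ algebraMap ℝ _ a ≤ M ∧ M ≤ algebraMap ℝ _ b := by
    rw [algebraMap_le_iff_le_spectrum hM.isSelfAdjoint,
      le_algebraMap_iff_spectrum_le hM.isSelfAdjoint]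
    exact ⟨fun h => ⟨fun x hx => (h hx).1, fun x hx => (h hx).2⟩,
      fun h x hx => ⟨h.1 x hx, h.2 x hx⟩⟩
  rw [hLoewner, le_iff_forall_dotProduct_mulVec_le (hr a) hM,
    le_iff_forall_dotProduct_mulVec_le hM (hr b)]
  simp only [dotProduct_algebraMap_mulVec, Set.mem_Icc, forall_and]

theorem IsHermitian.dotProduct_aeval_mulVec_mem_Icc {M : Matrix ι ι ℝ} (hM : M.IsHermitian)
    {p : ℝ[X]} {a b : ℝ} (h : Set.MapsTo (fun x => p.eval x) (spectrum ℝ M) (Set.Icc a b))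
    (v : ι → ℝ) : v ⬝ᵥ (aeval M p *ᵥ v) ∈ Set.Icc (a * (v ⬝ᵥ v)) (b * (v ⬝ᵥ v)) := by
  rw [← cfc_polynomial p M hM.isSelfAdjoint]
  have hf : (cfc (fun x => p.eval x) M).IsHermitian := cfc_predicate (p := IsSelfAdjoint) _ M
  refine hf.spectrum_subset_Icc_iff.1 ?_ v
  rw [cfc_map_spectrum _ M hM.isSelfAdjoint]
  exact h.image_subset

end MatrixOrder

variable [DecidableEq ι]

theorem spectrum_mul_inv_mul_transpose_subset_Icc {B C : Matrix ι ι ℝ} (hB : B.PosDef)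
    (hC : IsUnit C) {ρ0 ρ1 : ℝ} (hρ0 : 0 < ρ0)
    (hlow : ∀ v, ρ0 * (v ⬝ᵥ ((Cᵀ * C) *ᵥ v)) ≤ v ⬝ᵥ (B *ᵥ v))
    (hup : ∀ v, v ⬝ᵥ (B *ᵥ v) ≤ ρ1 * (v ⬝ᵥ ((Cᵀ * C) *ᵥ v))) :
    spectrum ℝ (C * B⁻¹ * Cᵀ) ⊆ Set.Icc ρ1⁻¹ ρ0⁻¹ := by
  have := hC.invertible
  have := hB.isUnit.invertible
  set Y := (C⁻¹)ᵀ * B * C⁻¹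
  have hYX : Y * (C * B⁻¹ * Cᵀ) = 1 := by
    simp only [Y, mul_assoc, mul_inv_cancel_left_of_invertible, inv_mul_cancel_left_of_invertible]
    rw [← transpose_mul, mul_inv_of_invertible, transpose_one]
  have hY : Y.IsHermitian := by
    simpa only [conjTranspose_eq_transpose_of_trivial] using
      isHermitian_conjTranspose_mul_mul C⁻¹ hB.isHermitian
  have hCC : (C⁻¹)ᵀ * (Cᵀ * C) * C⁻¹ = 1 := by
    rw [mul_assoc, mul_assoc, mul_inv_of_invertible, mul_one, ← transpose_mul,
      mul_inv_of_invertible, transpose_one]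
  have hYspec : spectrum ℝ Y ⊆ Set.Icc ρ0 ρ1 := hY.spectrum_subset_Icc_iff.2 fun v => by
    have hv : (C⁻¹ *ᵥ v) ⬝ᵥ ((Cᵀ * C) *ᵥ (C⁻¹ *ᵥ v)) = v ⬝ᵥ v := by
      rw [mulVec_dotProduct_mulVec_mulVec, hCC, one_mulVec]
    have hYv : v ⬝ᵥ (Y *ᵥ v) = (C⁻¹ *ᵥ v) ⬝ᵥ (B *ᵥ (C⁻¹ *ᵥ v)) :=
      (mulVec_dotProduct_mulVec_mulVec C⁻¹ B v).symm
    rw [hYv, ← hv]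
    exact ⟨hlow _, hup _⟩
  exact spectrum.inv_subset_Icc ⟨Y, _, hYX, mul_eq_one_comm.1 hYX⟩ hρ0 hYspec

end Matrix

theorem rayleigh_quotient_polynomial_bounds_general (n : ℕ)
    (A B : Matrix (Fin n) (Fin n) ℝ) (hA : A.PosDef) (hB : B.PosDef)
    (ρ0 ρ1 : ℝ) (hρ0 : 0 < ρ0)
    (hlow : ∀ v : Fin n → ℝ, ρ0 * (v ⬝ᵥ (A *ᵥ v)) ≤ v ⬝ᵥ (B *ᵥ v))
    (hup : ∀ v : Fin n → ℝ, v ⬝ᵥ (B *ᵥ v) ≤ ρ1 * (v ⬝ᵥ (A *ᵥ v)))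
    (q : Polynomial ℝ)
    (r0 r1 : ℝ)
    (hr0 : r0 = sInf ((fun x : ℝ => x * q.eval x) '' Set.Icc (1 / ρ1) (1 / ρ0)))
    (hr1 : r1 = sSup ((fun x : ℝ => x * q.eval x) '' Set.Icc (1 / ρ1) (1 / ρ0))) :
    ∀ y : Fin n → ℝ,
      r0 * (y ⬝ᵥ (A⁻¹ *ᵥ y)) ≤ y ⬝ᵥ ((B⁻¹ * aeval (A * B⁻¹) q) *ᵥ y) ∧
      y ⬝ᵥ ((B⁻¹ * aeval (A * B⁻¹) q) *ᵥ y) ≤ r1 * (y ⬝ᵥ (A⁻¹ *ᵥ y)) := by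
  obtain ⟨C, hC, rfl⟩ := hA.exists_eq_transpose_mul_self
  set M := C * B⁻¹ * Cᵀ
  have hM : M.IsHermitian := by
    simpa only [conjTranspose_eq_transpose_of_trivial, transpose_transpose] using
      isHermitian_conjTranspose_mul_mul Cᵀ hB.inv.isHermitian
  have hMspec : spectrum ℝ M ⊆ Set.Icc (1 / ρ1) (1 / ρ0) := by
    simpa only [one_div] using spectrum_mul_inv_mul_transpose_subset_Icc hB hC hρ0 hlow hup
  have hK := (isCompact_Icc (a := 1 / ρ1) (b := 1 / ρ0)).image
    (f := fun x : ℝ => x * q.eval x) (by fun_prop)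
  have hbounds : Set.MapsTo (fun x => (X * q).eval x) (spectrum ℝ M) (Set.Icc r0 r1) := by
    intro x hx
    have hmem := Set.mem_image_of_mem (fun x : ℝ => x * q.eval x) (hMspec hx)
    simp only [eval_mul, eval_X]
    exact ⟨hr0 ▸ csInf_le hK.bddBelow hmem, hr1 ▸ le_csSup hK.bddAbove hmem⟩
  have hintertwine : C * (B⁻¹ * aeval (Cᵀ * C * B⁻¹) q) * Cᵀ = aeval M (X * q) := by
    rw [aeval_mul_X_mul]
    simp only [mul_assoc]
  have hAinv : C * (Cᵀ * C)⁻¹ * Cᵀ = 1 := by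
    have := hC.invertible
    simp [Matrix.mul_inv_rev]
  intro y
  obtain ⟨w, rfl⟩ := mulVec_surjective_iff_isUnit.mpr ((isUnit_transpose C).mpr hC) y
  rw [mulVec_dotProduct_mulVec_mulVec, mulVec_dotProduct_mulVec_mulVec, transpose_transpose,
    hintertwine, hAinv, one_mulVec]
  exact hM.dotProduct_aeval_mulVec_mem_Icc hbounds w

theorem rayleigh_quotient_polynomial_bounds (n : ℕ)
    (A B : Matrix (Fin n) (Fin n) ℝ) (hA : A.PosDef) (hB : B.PosDef)
    (ρ0 ρ1 : ℝ) (hρ0 : 0 < ρ0) (hρ01 : ρ0 ≤ ρ1)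
    (hlow : ∀ v : Fin n → ℝ, ρ0 * (v ⬝ᵥ (A *ᵥ v)) ≤ v ⬝ᵥ (B *ᵥ v))
    (hup : ∀ v : Fin n → ℝ, v ⬝ᵥ (B *ᵥ v) ≤ ρ1 * (v ⬝ᵥ (A *ᵥ v)))
    (q : Polynomial ℝ)
    (r0 r1 : ℝ)
    (hr0 : r0 = sInf ((fun x : ℝ => x * q.eval x) '' Set.Icc (1 / ρ1) (1 / ρ0)))
    (hr1 : r1 = sSup ((fun x : ℝ => x * q.eval x) '' Set.Icc (1 / ρ1) (1 / ρ0))) :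
    ∀ y : Fin n → ℝ,
      r0 * (y ⬝ᵥ (A⁻¹ *ᵥ y)) ≤ y ⬝ᵥ ((B⁻¹ * aeval (A * B⁻¹) q) *ᵥ y) ∧
      y ⬝ᵥ ((B⁻¹ * aeval (A * B⁻¹) q) *ᵥ y) ≤ r1 * (y ⬝ᵥ (A⁻¹ *ᵥ y)) :=
  rayleigh_quotient_polynomial_bounds_general n A B hA hB ρ0 ρ1 hρ0 hlow hup q r0 r1 hr0 hr1
end

section
/- Let L be an invertible real N×N matrix and let C₁₁ (of size n₁×n₁), A_c and Z (both of size n₂×n₂, with n₁+n₂=N) be symmetric positive definite matrices. Define the block-diagonal matrices D̄ := diag(C₁₁, A_c) and D := diag(C₁₁, Z), and set C := L D̄ Lᵀ and B := L D Lᵀ. Let A be a symmetric positive definite N×N matrix and suppose there are constants 0 < θ₀ ≤ θ₁ with θ₀ vᵀAv ≤ vᵀCv ≤ θ₁ vᵀAv for all v ∈ ℝᴺ, and constants 0 < r₀ ≤ r₁ with r₀ yᵀZy ≤ yᵀA_c y ≤ r₁ yᵀZy for all y ∈ ℝ^{n₂}. Then for all v ∈ ℝᴺ: (θ₀ / max{1,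 r₁}) vᵀAv ≤ vᵀBv ≤ (θ₁ / min{1, r₀}) vᵀAv; equivalently, (1/θ₁)·min{1, r₀}· vᵀBv ≤ vᵀAv ≤ (1/θ₀)·max{1, r₁}· vᵀBv. -/
/-!
Writing `w = Lᵀ v`, the quadratic forms of `C = L D̄ Lᵀ` and `B = L D Lᵀ` at `v` are those of the
block-diagonal matrices `D̄` and `D` at `w`, namely `w₁ᵀ C₁₁ w₁ + w₂ᵀ A_c w₂` and `w₁ᵀ C₁₁ w₁ + w₂ᵀ Z w₂`.
The bounds `r₀ Z ≤ A_c ≤ r₁ Z` therefore give `min {1, r₀} B ≤ C ≤ max {1, r₁} B`, and chaining this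
with `θ₀ A ≤ C ≤ θ₁ A` yields the estimates between `A` and `B`.
-/

open Matrix

section QuadraticForm

variable {m n R : Type*} [Fintype m] [Fintype n]

theorem dotProduct_mul_mul_transpose_mulVec [CommSemiring R] (L : Matrix m n R)
    (M : Matrix n n R) (v : m → R) :
    v ⬝ᵥ ((L * M * Lᵀ) *ᵥ v) = (Lᵀ *ᵥ v) ⬝ᵥ (M *ᵥ (Lᵀ *ᵥ v)) := by
  rw [← mulVec_mulVec, ← mulVec_mulVec, mulVec_transpose, dotProduct_mulVec]

theorem dotProduct_fromBlocks_zero_zero_mulVec [CommSemiring R] (P : Matrix m m R)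
    (Q : Matrix n n R) (w : m ⊕ n → R) :
    w ⬝ᵥ (fromBlocks P 0 0 Q *ᵥ w) =
      (w ∘ Sum.inl) ⬝ᵥ (P *ᵥ (w ∘ Sum.inl)) + (w ∘ Sum.inr) ⬝ᵥ (Q *ᵥ (w ∘ Sum.inr)) := by
  conv_lhs => rw [← Sum.elim_comp_inl_inr w]
  rw [fromBlocks_mulVec, sumElim_dotProduct_sumElim]
  simp only [zero_mulVec, add_zero, zero_add, Sum.elim_comp_inl, Sum.elim_comp_inr]

variable {P : Matrix m m ℝ} {Q Q' : Matrix n n ℝ}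

theorem min_one_mul_dotProduct_fromBlocks_mulVec_le (hP : P.PosSemidef) (hQ : Q.PosSemidef)
    {r : ℝ} (h : ∀ y, r * (y ⬝ᵥ (Q *ᵥ y)) ≤ y ⬝ᵥ (Q' *ᵥ y)) (w : m ⊕ n → ℝ) :
    min 1 r * (w ⬝ᵥ (fromBlocks P 0 0 Q *ᵥ w)) ≤ w ⬝ᵥ (fromBlocks P 0 0 Q' *ᵥ w) := by
  rw [dotProduct_fromBlocks_zero_zero_mulVec, dotProduct_fromBlocks_zero_zero_mulVec,
    mul_add]
  have hP₁ := hP.dotProduct_mulVec_nonneg (w ∘ Sum.inl)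
  have hQ₂ := hQ.dotProduct_mulVec_nonneg (w ∘ Sum.inr)
  simp only [star_trivial] at hP₁ hQ₂
  gcongr
  · exact mul_le_of_le_one_left hP₁ (min_le_left _ _)
  · exact (mul_le_mul_of_nonneg_right (min_le_right _ _) hQ₂).trans (h _)

theorem dotProduct_fromBlocks_mulVec_le_max_one_mul (hP : P.PosSemidef) (hQ : Q.PosSemidef)
    {r : ℝ} (h : ∀ y, y ⬝ᵥ (Q' *ᵥ y) ≤ r * (y ⬝ᵥ (Q *ᵥ y))) (w : m ⊕ n → ℝ) :
    w ⬝ᵥ (fromBlocks P 0 0 Q' *ᵥ w) ≤ max 1 r * (w ⬝ᵥ (fromBlocks P 0 0 Q *ᵥ w)) := by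
  rw [dotProduct_fromBlocks_zero_zero_mulVec, dotProduct_fromBlocks_zero_zero_mulVec,
    mul_add]
  have hP₁ := hP.dotProduct_mulVec_nonneg (w ∘ Sum.inl)
  have hQ₂ := hQ.dotProduct_mulVec_nonneg (w ∘ Sum.inr)
  simp only [star_trivial] at hP₁ hQ₂
  gcongr
  · exact le_mul_of_one_le_left hP₁ (le_max_left _ _)
  · exact (h _).trans (mul_le_mul_of_nonneg_right (le_max_right _ _) hQ₂)

end QuadraticForm

theorem amli_induction_step_general (n₁ n₂ : ℕ)
    (L : Matrix (Fin n₁ ⊕ Fin n₂) (Fin n₁ ⊕ Fin n₂) ℝ)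
    (C11 : Matrix (Fin n₁) (Fin n₁) ℝ) (hC11 : C11.PosDef)
    (Ac Z : Matrix (Fin n₂) (Fin n₂) ℝ) (hZ : Z.PosDef)
    (Dbar D C B : Matrix (Fin n₁ ⊕ Fin n₂) (Fin n₁ ⊕ Fin n₂) ℝ)
    (hDbar : Dbar = fromBlocks C11 0 0 Ac)
    (hD : D = fromBlocks C11 0 0 Z)
    (hC : C = L * Dbar * Lᵀ)
    (hB : B = L * D * Lᵀ)
    (A : Matrix (Fin n₁ ⊕ Fin n₂) (Fin n₁ ⊕ Fin n₂) ℝ)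
    (θ0 θ1 : ℝ) (hθ0 : 0 < θ0) (hθ01 : θ0 ≤ θ1)
    (hθlow : ∀ v : Fin n₁ ⊕ Fin n₂ → ℝ, θ0 * (v ⬝ᵥ (A *ᵥ v)) ≤ v ⬝ᵥ (C *ᵥ v))
    (hθup : ∀ v : Fin n₁ ⊕ Fin n₂ → ℝ, v ⬝ᵥ (C *ᵥ v) ≤ θ1 * (v ⬝ᵥ (A *ᵥ v)))
    (r0 r1 : ℝ) (hr0 : 0 < r0)
    (hrlow : ∀ y : Fin n₂ → ℝ, r0 * (y ⬝ᵥ (Z *ᵥ y)) ≤ y ⬝ᵥ (Ac *ᵥ y))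
    (hrup : ∀ y : Fin n₂ → ℝ, y ⬝ᵥ (Ac *ᵥ y) ≤ r1 * (y ⬝ᵥ (Z *ᵥ y))) :
    ∀ v : Fin n₁ ⊕ Fin n₂ → ℝ,
      (θ0 / max 1 r1) * (v ⬝ᵥ (A *ᵥ v)) ≤ v ⬝ᵥ (B *ᵥ v) ∧
      v ⬝ᵥ (B *ᵥ v) ≤ (θ1 / min 1 r0) * (v ⬝ᵥ (A *ᵥ v)) ∧
      (1 / θ1) * min 1 r0 * (v ⬝ᵥ (B *ᵥ v)) ≤ v ⬝ᵥ (A *ᵥ v) ∧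
      v ⬝ᵥ (A *ᵥ v) ≤ (1 / θ0) * max 1 r1 * (v ⬝ᵥ (B *ᵥ v)) := by
  intro v
  have hCB_low : min 1 r0 * (v ⬝ᵥ (B *ᵥ v)) ≤ v ⬝ᵥ (C *ᵥ v) := by
    rw [hB, hC, hD, hDbar, dotProduct_mul_mul_transpose_mulVec,
      dotProduct_mul_mul_transpose_mulVec]
    exact min_one_mul_dotProduct_fromBlocks_mulVec_le hC11.posSemidef hZ.posSemidef hrlow _
  have hCB_up : v ⬝ᵥ (C *ᵥ v) ≤ max 1 r1 * (v ⬝ᵥ (B *ᵥ v)) := by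
    rw [hB, hC, hD, hDbar, dotProduct_mul_mul_transpose_mulVec,
      dotProduct_mul_mul_transpose_mulVec]
    exact dotProduct_fromBlocks_mulVec_le_max_one_mul hC11.posSemidef hZ.posSemidef hrup _
  have hmin : 0 < min 1 r0 := lt_min one_pos hr0
  have hmax : 0 < max 1 r1 := one_pos.trans_le (le_max_left _ _)
  have hθ1 : 0 < θ1 := hθ0.trans_le hθ01
  have hθl := hθlow v
  have hθu := hθup v
  refine ⟨?_, ?_, ?_, ?_⟩
  · rw [div_mul_eq_mul_div, div_le_iff₀ hmax]; linarith
  · rw [div_mul_eq_mul_div, le_div_iff₀ hmin]; linarith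
  · rw [mul_assoc, one_div_mul_eq_div, div_le_iff₀ hθ1]; linarith
  · rw [mul_assoc, one_div_mul_eq_div, le_div_iff₀ hθ0]; linarith

theorem amli_induction_step (n₁ n₂ : ℕ)
    (L : Matrix (Fin n₁ ⊕ Fin n₂) (Fin n₁ ⊕ Fin n₂) ℝ) (hL : IsUnit L.det)
    (C11 : Matrix (Fin n₁) (Fin n₁) ℝ) (hC11 : C11.PosDef)
    (Ac Z : Matrix (Fin n₂) (Fin n₂) ℝ) (hAc : Ac.PosDef) (hZ : Z.PosDef)
    (Dbar D C B : Matrix (Fin n₁ ⊕ Fin n₂) (Fin n₁ ⊕ Fin n₂) ℝ)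
    (hDbar : Dbar = fromBlocks C11 0 0 Ac)
    (hD : D = fromBlocks C11 0 0 Z)
    (hC : C = L * Dbar * Lᵀ)
    (hB : B = L * D * Lᵀ)
    (A : Matrix (Fin n₁ ⊕ Fin n₂) (Fin n₁ ⊕ Fin n₂) ℝ) (hA : A.PosDef)
    (θ0 θ1 : ℝ) (hθ0 : 0 < θ0) (hθ01 : θ0 ≤ θ1)
    (hθlow : ∀ v : Fin n₁ ⊕ Fin n₂ → ℝ, θ0 * (v ⬝ᵥ (A *ᵥ v)) ≤ v ⬝ᵥ (C *ᵥ v))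
    (hθup : ∀ v : Fin n₁ ⊕ Fin n₂ → ℝ, v ⬝ᵥ (C *ᵥ v) ≤ θ1 * (v ⬝ᵥ (A *ᵥ v)))
    (r0 r1 : ℝ) (hr0 : 0 < r0) (hr01 : r0 ≤ r1)
    (hrlow : ∀ y : Fin n₂ → ℝ, r0 * (y ⬝ᵥ (Z *ᵥ y)) ≤ y ⬝ᵥ (Ac *ᵥ y))
    (hrup : ∀ y : Fin n₂ → ℝ, y ⬝ᵥ (Ac *ᵥ y) ≤ r1 * (y ⬝ᵥ (Z *ᵥ y))) :
    ∀ v : Fin n₁ ⊕ Fin n₂ → ℝ,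
      (θ0 / max 1 r1) * (v ⬝ᵥ (A *ᵥ v)) ≤ v ⬝ᵥ (B *ᵥ v) ∧
      v ⬝ᵥ (B *ᵥ v) ≤ (θ1 / min 1 r0) * (v ⬝ᵥ (A *ᵥ v)) ∧
      (1 / θ1) * min 1 r0 * (v ⬝ᵥ (B *ᵥ v)) ≤ v ⬝ᵥ (A *ᵥ v) ∧
      v ⬝ᵥ (A *ᵥ v) ≤ (1 / θ0) * max 1 r1 * (v ⬝ᵥ (B *ᵥ v)) :=
  amli_induction_step_general n₁ n₂ L C11 hC11 Ac Z hZ Dbar D C B hDbar hD hC hB A θ0 θ1 hθ0 hθ01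
    hθlow hθup r0 r1 hr0 hrlow hrup
end

section
/- Let a > 1 be real and set δ := a − √(a² − 1), so 0 < δ < 1. For every integer m ≥ 0 and every real polynomial Q of degree at most m, the uniform error satisfies sup over t ∈ [−1,1] of |1/(t+a) − Q(t)| ≥ δᵐ / (a² − 1). -/
/-!
Write `a = (δ + δ⁻¹) / 2` and `t = cos θ`. The best approximation `Q*` is explicit: with
`S = T_{m+1} + 2δ T_m + δ² T_{m-1}`, the polynomial `S / S(-a)` equals `1` at `-a`, so
`Q* = (1 - S / S(-a)) / (X + a)` has degree `≤ m` and error `S(t) / (S(-a) (t + a))`. On the circle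
`t = (z + z⁻¹)/2`, `z = exp (θ I)`, the numerator is `Re (z^(m-1) (z + δ)²)`, which makes the error
`ε cos (mθ + 2ψ(θ))` with `ψ(θ) = arg (exp (θ I / 2) + δ exp (-θ I / 2))` and `|ε| = δᵐ / (a² - 1)`;
the value `S(-a)` comes from `z = -δ`, where `z + δ` vanishes. The phase runs continuously from `0`
to `(m + 1)π`, so the error equioscillates at `m + 2` points of `[-1, 1]`. If some `Q` had error
below `|ε|` at all of them, `Q - Q*` would change sign `m + 1` times, which is impossible in degree
`≤ m` (de la Vallée Poussin).
-/

open Polynomial Set Real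

theorem exists_mem_Ioo_eq_zero_of_mul_neg {f : ℝ → ℝ} {a b : ℝ} (hab : a ≤ b)
    (hf : ContinuousOn f (Icc a b)) (h : f a * f b < 0) : ∃ c ∈ Ioo a b, f c = 0 := by
  rcases mul_neg_iff.1 h with ⟨ha, hb⟩ | ⟨ha, hb⟩
  · exact intermediate_value_Ioo' hab hf ⟨hb, ha⟩
  · exact intermediate_value_Ioo hab hf ⟨ha, hb⟩

theorem ContinuousOn.exists_isLeast_eq {f : ℝ → ℝ} {a b c : ℝ} (hab : a ≤ b)
    (hf : ContinuousOn f (Icc a b)) (hc : c ∈ Icc (f a) (f b)) :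
    ∃ t, IsLeast {s ∈ Icc a b | c ≤ f s} t ∧ f t = c := by
  have hclosed : IsClosed {s ∈ Icc a b | c ≤ f s} :=
    hf.preimage_isClosed_of_isClosed isClosed_Icc isClosed_Ici
  have ht := hclosed.isLeast_csInf ⟨b, ⟨hab, le_rfl⟩, hc.2⟩ ⟨a, fun s hs => hs.1.1⟩
  refine ⟨_, ht, le_antisymm ?_ ht.1.2⟩
  set t := sInf {s ∈ Icc a b | c ≤ f s}
  by_contra! hlt
  obtain ⟨s, hs, hfs⟩ := intermediate_value_Icc ht.1.1.1 (hf.mono (Icc_subset_Icc_right ht.1.1.2))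
    ⟨hc.1, hlt.le⟩
  have hst : s = t := le_antisymm hs.2 (ht.2 ⟨⟨hs.1, hs.2.trans ht.1.1.2⟩, hfs.ge⟩)
  exact hlt.ne' (hst ▸ hfs)

theorem ContinuousOn.exists_strictMonoOn_eq {f : ℝ → ℝ} {a b : ℝ} (hab : a ≤ b)
    (hf : ContinuousOn f (Icc a b)) {n : ℕ} {y : ℕ → ℝ} (hy : StrictMonoOn y (Iic n))
    (ha : f a ≤ y 0) (hb : y n ≤ f b) :
    ∃ t : ℕ → ℝ, StrictMonoOn t (Iic n) ∧ ∀ k ≤ n, t k ∈ Icc a b ∧ f (t k) = y k := by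
  -- first hitting times of increasing levels increase
  have hex (k : ℕ) : ∃ t, k ≤ n → IsLeast {s ∈ Icc a b | y k ≤ f s} t ∧ f t = y k := by
    by_cases hk : k ≤ n
    · obtain ⟨t, ht⟩ := hf.exists_isLeast_eq hab
        ⟨ha.trans (hy.monotoneOn (mem_Iic.2 (Nat.zero_le _)) hk (Nat.zero_le _)),
          (hy.monotoneOn hk (mem_Iic.2 le_rfl) hk).trans hb⟩
      exact ⟨t, fun _ => ht⟩
    · exact ⟨0, fun h => absurd h hk⟩
  choose t ht using hex
  refine ⟨t, fun j hj k hk hjk => lt_of_le_of_ne ?_ fun h => ?_,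
    fun k hk => ⟨(ht k hk).1.1.1, (ht k hk).2⟩⟩
  · exact (ht j hj).1.2 ⟨(ht k hk).1.1.1, ((hy hj hk hjk).le.trans (ht k hk).2.ge)⟩
  · exact (hy hj hk hjk).ne ((ht j hj).2.symm.trans (h ▸ (ht k hk).2))

theorem Polynomial.le_natDegree_of_sign_changes {p : ℝ[X]} {n : ℕ} {x : ℕ → ℝ}
    (hx : StrictAntiOn x (Iic n)) (hp : ∀ k < n, p.eval (x k) * p.eval (x (k + 1)) < 0) :
    n ≤ p.natDegree := by
  have hroot (k : Fin n) : ∃ r ∈ Ioo (x (k + 1)) (x k), p.eval r = 0 :=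
    exists_mem_Ioo_eq_zero_of_mul_neg
      (hx.antitoneOn (mem_Iic.2 k.2.le) (mem_Iic.2 k.2) k.val.le_succ)
      p.continuous.continuousOn (by rw [mul_comm]; exact hp k k.2)
  choose r hr hr0 using hroot
  have hr_anti : StrictAnti r := fun j k hjk =>
    calc r k < x k := (hr k).2
      _ ≤ x (j + 1) := hx.antitoneOn (mem_Iic.2 j.2) (mem_Iic.2 k.2.le) hjk
      _ < r j := (hr j).1
  by_contra! hlt
  have hp0 : p = 0 :=
    eq_zero_of_natDegree_lt_card_of_eval_eq_zero p hr_anti.injective hr0 (by simpa using hlt)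
  simpa [hp0] using hp 0 (by omega)

theorem exists_le_abs_sub_eval_of_alternating {f : ℝ → ℝ} {P Q : ℝ[X]} {m : ℕ}
    (hP : P.natDegree ≤ m) (hQ : Q.natDegree ≤ m) {x : ℕ → ℝ}
    (hx : StrictAntiOn x (Iic (m + 1))) {ε : ℝ} (hε : ε ≠ 0)
    (halt : ∀ k ≤ m + 1, f (x k) - P.eval (x k) = (-1) ^ k * ε) :
    ∃ k ≤ m + 1, |ε| ≤ |f (x k) - Q.eval (x k)| := by
  by_contra! hlt
  have hsign (k : ℕ) (hk : k ≤ m + 1) : 0 < (-1) ^ k * ε * (Q - P).eval (x k) := by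
    set e := f (x k) - Q.eval (x k)
    have hdiff : (Q - P).eval (x k) = (-1) ^ k * ε - e := by rw [eval_sub, ← halt k hk]; ring
    have habs : |(-1) ^ k * ε| = |ε| := by simp
    have hprod : (-1) ^ k * ε * e ≤ |ε| * |e| := by
      simpa only [abs_mul, habs] using le_abs_self ((-1) ^ k * ε * e)
    rw [hdiff]
    nlinarith [hlt k hk, abs_pos.2 hε, sq_abs ((-1) ^ k * ε)]
  have hdeg := (Q - P).le_natDegree_of_sign_changes hx fun k hk => by
    have h₀ := hsign k hk.le
    have h₁ := hsign (k + 1) hk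
    rw [pow_succ] at h₁
    have hsq : ((-1 : ℝ) ^ k * ε) ^ 2 > 0 := by positivity
    nlinarith [mul_pos h₀ h₁]
  have := natDegree_sub_le Q P
  omega

theorem one_div_sub_eval_divByMonic {K : Type*} [Field K] {P : K[X]} {x₀ t : K}
    (hP : P.eval x₀ = 1) (ht : t - x₀ ≠ 0) :
    1 / (t - x₀) - ((1 - P) /ₘ (X - C x₀)).eval t = P.eval t / (t - x₀) := by
  have h := congrArg (eval t) (mul_divByMonic_eq_iff_isRoot.2 (by simp [hP] : IsRoot (1 - P) x₀))
  rw [eval_mul, eval_sub, eval_X, eval_C, eval_sub, eval_one] at h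
  field_simp
  linear_combination -h

theorem natDegree_divByMonic_X_sub_C_le {R : Type*} [CommRing R] [Nontrivial R] {p : R[X]}
    {n : ℕ} (hp : p.natDegree ≤ n + 1) (x₀ : R) : (p /ₘ (X - C x₀)).natDegree ≤ n := by
  rw [natDegree_divByMonic p (monic_X_sub_C x₀), natDegree_X_sub_C]
  omega

theorem Polynomial.Chebyshev.T_eval_half_add_inv {K : Type*} [Field K] [NeZero (2 : K)] {z : K}
    (hz : z ≠ 0) (n : ℤ) : (T K n).eval ((z + z⁻¹) / 2) = (z ^ n + z ^ (-n)) / 2 := by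
  induction n using Polynomial.Chebyshev.induct' with
  | zero => simp
  | one => simp
  | add_two n ih1 ih2 =>
    simp only [T_add_two, eval_sub, eval_mul, eval_X, eval_ofNat, ih1, ih2]
    simp only [neg_add, zpow_add₀ hz, zpow_neg, zpow_natCast]
    field_simp
    ring
  | neg n ih => simpa [add_comm] using ih

noncomputable def errorNumerator (m : ℕ) (δ : ℝ) : ℝ[X] :=
  Chebyshev.T ℝ ((m : ℤ) + 1) + C (2 * δ) * Chebyshev.T ℝ m
    + C (δ ^ 2) * Chebyshev.T ℝ ((m : ℤ) - 1)

theorem natDegree_errorNumerator_le (m : ℕ) (δ : ℝ) : (errorNumerator m δ).natDegree ≤ m + 1 := by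
  unfold errorNumerator
  refine natDegree_add_le_of_degree_le (natDegree_add_le_of_degree_le ?_ ?_) ?_
  · rw [Chebyshev.natDegree_T]; omega
  · refine (natDegree_C_mul_le _ _).trans ?_
    rw [Chebyshev.natDegree_T]; omega
  · refine (natDegree_C_mul_le _ _).trans ?_
    rw [Chebyshev.natDegree_T]; omega

theorem errorNumerator_eval_half_add_inv (m : ℕ) (δ : ℝ) {z : ℝ} (hz : z ≠ 0) :
    2 * z ^ (m + 1) * (errorNumerator m δ).eval ((z + z⁻¹) / 2) =
      z ^ (2 * m) * (z + δ) ^ 2 + (1 + δ * z) ^ 2 := by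
  simp only [errorNumerator, eval_add, eval_mul, eval_C, Chebyshev.T_eval_half_add_inv hz,
    neg_add, neg_sub, zpow_add₀ hz, zpow_sub₀ hz, zpow_neg, zpow_natCast, zpow_one]
  field_simp
  ring

-- `(m - 1)θ + 2 arg (exp (θ I) + δ)`, with `exp (θ I / 2)` split off so that the argument stays
-- in the slit plane, hence continuous, up to `θ = π`.
noncomputable def phase (m : ℕ) (δ θ : ℝ) : ℝ :=
  m * θ + 2 * Complex.arg ⟨(1 + δ) * cos (θ / 2), (1 - δ) * sin (θ / 2)⟩

theorem errorNumerator_eval_cos (m : ℕ) (δ θ : ℝ) :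
    (errorNumerator m δ).eval (cos θ) = (1 + 2 * δ * cos θ + δ ^ 2) * cos (phase m δ θ) := by
  set w : ℂ := ⟨(1 + δ) * cos (θ / 2), (1 - δ) * sin (θ / 2)⟩
  have hre : ‖w‖ * cos (Complex.arg w) = (1 + δ) * cos (θ / 2) := Complex.norm_mul_cos_arg w
  have him : ‖w‖ * sin (Complex.arg w) = (1 - δ) * sin (θ / 2) := Complex.norm_mul_sin_arg w
  have hcos : cos θ = cos (θ / 2) ^ 2 - sin (θ / 2) ^ 2 := by rw [← cos_two_mul']; ring_nf
  have hsin : sin θ = 2 * sin (θ / 2) * cos (θ / 2) := by rw [← sin_two_mul]; ring_nf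
  have hpy := sin_sq_add_cos_sq (θ / 2)
  have hnorm : 1 + 2 * δ * cos θ + δ ^ 2 = ‖w‖ ^ 2 := by
    rw [Complex.sq_norm, Complex.normSq_mk]; linear_combination 2 * δ * hcos - (1 + δ ^ 2) * hpy
  simp only [errorNumerator, eval_add, eval_mul, eval_C, Chebyshev.T_real_cos, phase, hnorm]
  push_cast
  rw [add_mul, sub_mul, one_mul, cos_add, cos_sub, cos_add, cos_two_mul', sin_two_mul]
  linear_combination cos (m * θ) * (1 + δ ^ 2) * hcos - sin (m * θ) * (1 - δ ^ 2) * hsin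
    - 2 * δ * cos (m * θ) * hpy
    - cos (m * θ) * (‖w‖ * cos (Complex.arg w) + (1 + δ) * cos (θ / 2)) * hre
    + cos (m * θ) * (‖w‖ * sin (Complex.arg w) + (1 - δ) * sin (θ / 2)) * him
    + 2 * sin (m * θ) * (‖w‖ * sin (Complex.arg w) * hre + (1 + δ) * cos (θ / 2) * him)

theorem continuousOn_phase (m : ℕ) {δ : ℝ} (h₁ : -1 < δ) (h₂ : δ < 1) :
    ContinuousOn (phase m δ) (Icc 0 π) := by
  refine (continuous_const.mul continuous_id).continuousOn.add
    (continuousOn_const.mul fun θ hθ => ?_)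
  have hslit : (⟨(1 + δ) * cos (θ / 2), (1 - δ) * sin (θ / 2)⟩ : ℂ) ∈ Complex.slitPlane := by
    rw [Complex.mem_slitPlane_iff]
    rcases hθ.2.lt_or_eq with hlt | rfl
    · left
      exact mul_pos (by linarith) (cos_pos_of_mem_Ioo ⟨by linarith [hθ.1, pi_pos], by linarith⟩)
    · right
      simp [sub_eq_zero, h₂.ne']
  refine (Complex.continuousAt_arg hslit).comp_continuousWithinAt (f := fun θ : ℝ =>
    (⟨(1 + δ) * cos (θ / 2), (1 - δ) * sin (θ / 2)⟩ : ℂ)) ?_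
  simp only [Complex.mk_eq_add_mul_I]
  fun_prop

theorem phase_zero (m : ℕ) {δ : ℝ} (h : -1 < δ) : phase m δ 0 = 0 := by
  have hw : (⟨1 + δ, 0⟩ : ℂ) = ((1 + δ : ℝ) : ℂ) := rfl
  simp only [phase, zero_div, cos_zero, sin_zero, mul_one, mul_zero, hw,
    Complex.arg_ofReal_of_nonneg (by linarith : 0 ≤ 1 + δ), add_zero]

theorem phase_pi (m : ℕ) {δ : ℝ} (h : δ < 1) : phase m δ π = (m + 1) * π := by
  have hw : (⟨0, 1 - δ⟩ : ℂ) = ((1 - δ : ℝ) : ℂ) * Complex.I := by simp [Complex.ext_iff]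
  rw [phase, cos_pi_div_two, sin_pi_div_two, mul_zero, mul_one, hw,
    Complex.arg_real_mul _ (by linarith : 0 < 1 - δ), Complex.arg_I]
  ring

theorem exists_strictMonoOn_phase_eq (m : ℕ) {δ : ℝ} (h₁ : -1 < δ) (h₂ : δ < 1) :
    ∃ θ : ℕ → ℝ, StrictMonoOn θ (Iic (m + 1)) ∧
      ∀ k ≤ m + 1, θ k ∈ Icc 0 π ∧ phase m δ (θ k) = k * π :=
  (continuousOn_phase m h₁ h₂).exists_strictMonoOn_eq pi_pos.le
    (fun _ _ _ _ h => mul_lt_mul_of_pos_right (Nat.cast_lt.2 h) pi_pos)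
    (by simp [phase_zero m h₁]) (by simp [phase_pi m h₂])

theorem one_lt_half_add_inv {δ : ℝ} (hδ₀ : 0 < δ) (hδ₁ : δ < 1) : 1 < (δ + δ⁻¹) / 2 := by
  have : 0 < (1 - δ) ^ 2 / (2 * δ) := by positivity
  have h : (δ + δ⁻¹) / 2 = 1 + (1 - δ) ^ 2 / (2 * δ) := by field_simp; ring
  linarith

theorem exists_one_div_add_sub_eval_eq_mul_cos_phase (m : ℕ) {δ : ℝ} (hδ₀ : 0 < δ)
    (hδ₁ : δ < 1) :
    ∃ P : ℝ[X], P.natDegree ≤ m ∧ ∃ ε : ℝ, ε ≠ 0 ∧ |ε| = δ ^ m / (((δ + δ⁻¹) / 2) ^ 2 - 1) ∧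
      ∀ θ, 1 / (cos θ + (δ + δ⁻¹) / 2) - P.eval (cos θ) = ε * cos (phase m δ θ) := by
  set a := (δ + δ⁻¹) / 2 with ha
  have hσ : 2 * (-δ) ^ (m + 1) * (errorNumerator m δ).eval (-a) = (1 - δ ^ 2) ^ 2 := by
    rw [show -a = (-δ + (-δ)⁻¹) / 2 by rw [ha]; ring,
      errorNumerator_eval_half_add_inv m δ (neg_ne_zero.2 hδ₀.ne')]
    ring
  set σ := (errorNumerator m δ).eval (-a)
  have hδ2 : 0 < (1 - δ ^ 2) ^ 2 := pow_pos (by nlinarith) 2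
  have hσ0 : σ ≠ 0 := by rintro h; rw [h, mul_zero] at hσ; exact hδ2.ne hσ
  have hPa : (C σ⁻¹ * errorNumerator m δ).eval (-a) = 1 := by
    rw [eval_mul, eval_C, inv_mul_cancel₀ hσ0]
  have ha₁ := one_lt_half_add_inv hδ₀ hδ₁
  refine ⟨(1 - C σ⁻¹ * errorNumerator m δ) /ₘ (X - C (-a)),
    natDegree_divByMonic_X_sub_C_le ?_ (-a), 2 * δ / σ, by positivity, ?_, fun θ => ?_⟩
  · exact (natDegree_sub_le _ _).trans (max_le (by simp)
      ((natDegree_C_mul_le _ _).trans (natDegree_errorNumerator_le m δ)))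
  · have hδm : (-δ) ^ (m + 1) ≠ 0 := pow_ne_zero _ (neg_ne_zero.2 hδ₀.ne')
    have hε : 2 * δ / σ = 4 * δ * (-δ) ^ (m + 1) / (1 - δ ^ 2) ^ 2 := by
      rw [← hσ]; field_simp; ring
    rw [hε, abs_div, abs_mul, abs_pow, abs_neg, abs_of_pos hδ₀, abs_of_pos hδ2,
      abs_of_pos (by positivity : (0 : ℝ) < 4 * δ), ha]
    field_simp
    ring
  · have hθ : cos θ - -a ≠ 0 := by linarith [neg_one_le_cos θ]
    rw [← sub_neg_eq_add, one_div_sub_eval_divByMonic hPa hθ, eval_mul, eval_C,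
      errorNumerator_eval_cos,
      show 1 + 2 * δ * cos θ + δ ^ 2 = 2 * δ * (cos θ - -a) by rw [ha]; field_simp; ring]
    field_simp

theorem mem_Ioo_and_eq_half_add_inv_of_eq_sub_sqrt {a δ : ℝ} (ha : 1 < a)
    (hδ : δ = a - √(a ^ 2 - 1)) : 0 < δ ∧ δ < 1 ∧ a = (δ + δ⁻¹) / 2 := by
  have hsq : √(a ^ 2 - 1) ^ 2 = a ^ 2 - 1 := sq_sqrt (by nlinarith)
  have hpos : 0 < √(a ^ 2 - 1) := sqrt_pos.2 (by nlinarith)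
  have hlt : √(a ^ 2 - 1) < a := by nlinarith
  have hδ₀ : 0 < δ := by linarith
  refine ⟨hδ₀, by nlinarith, ?_⟩
  field_simp
  rw [hδ]
  linear_combination -hsq

theorem best_approx_inv_lower_bound (a : ℝ) (ha : 1 < a)
    (δ : ℝ) (hδ : δ = a - Real.sqrt (a ^ 2 - 1))
    (m : ℕ) (Q : Polynomial ℝ) (hQ : Q.degree ≤ (m : ℕ)) :
    δ ^ m / (a ^ 2 - 1) ≤
      sSup ((fun t : ℝ => |1 / (t + a) - Q.eval t|) '' Set.Icc (-1 : ℝ) 1) := by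
  obtain ⟨hδ₀, hδ₁, rfl⟩ := mem_Ioo_and_eq_half_add_inv_of_eq_sub_sqrt ha hδ
  obtain ⟨P, hP, ε, hε₀, hε, herr⟩ := exists_one_div_add_sub_eval_eq_mul_cos_phase m hδ₀ hδ₁
  obtain ⟨θ, hθ, hθk⟩ := exists_strictMonoOn_phase_eq m (by linarith) hδ₁
  obtain ⟨k, -, hk⟩ := exists_le_abs_sub_eval_of_alternating
    (f := fun t => 1 / (t + (δ + δ⁻¹) / 2)) (x := cos ∘ θ) hP (natDegree_le_of_degree_le hQ)
    (strictAntiOn_cos.comp_strictMonoOn hθ fun k hk => (hθk k hk).1) hε₀ fun k hk => by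
      rw [Function.comp_apply, herr, (hθk k hk).2, cos_nat_mul_pi, mul_comm]
  have hcont : ContinuousOn (fun t : ℝ => |1 / (t + (δ + δ⁻¹) / 2) - Q.eval t|) (Icc (-1) 1) :=
    ((continuousOn_const.div (continuousOn_id.add continuousOn_const) fun t ht =>
      (by linarith [ht.1] : 0 < t + (δ + δ⁻¹) / 2).ne').sub Q.continuous.continuousOn).abs
  rw [← hε]
  exact hk.trans (hcont.le_sSup_image_Icc ⟨neg_one_le_cos _, cos_le_one _⟩)
end

section
/- Let a > 1 be real, δ := a − √(a² − 1), and η := −δ. For an integer m ≥ 1 define the polynomial Q_m(t) := −2/(η − η⁻¹) + (4/(η − η⁻¹)) · Σ_{j=0}^{m−1} ηʲ T_j(t) − (4 η^{m−1}/(η − η⁻¹)²) T_m(t), where T_j is the Chebyshev polynomial of the first kind of degree j. Then Q_m has degree at most m and sup over t ∈ [−1,1] of |1/(t+a) − Q_m(t)| = δᵐ / (a² − 1). In particular, Q_m is a polynomial of best uniform approximation to 1/(t+a) on [−1,1] out of the polynomials of degree at most m. -/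
/-!
Write `t = cos θ`, `z = exp (θ i)` and `s = √(a² - 1)`. Then
`1/(t + a) = (2/s) Re (1/(1 - ηz)) - 1/s`, and `Q_m(t)` is the real part of the same expression
with `1/(1 - ηz)` replaced by its truncated geometric series and corrected by a multiple of `zᵐ`;
the correction is chosen so that the remainder collapses to `-(ηᵐ/(a² - 1)) · B(z)` with the
Blaschke product `B(z) = zᵐ (z - η)/(1 - ηz)`. On the unit circle `|B| = 1`, so the error is
bounded by `δᵐ/(a² - 1)`, with equality at `t = 1`. The continuous argument of `B(exp (θ i))` runs
from `0` to `(m + 1)π` on `[0, π]`, so the error equioscillates at `m + 2` points, and by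
Chebyshev's alternation argument no polynomial of degree `≤ m` does better: its difference with
`Q_m` would have `m + 1` zeros.
-/

open Polynomial Polynomial.Chebyshev
open Complex ComplexConjugate

theorem exists_strictMono_eq_of_continuousOn {g : ℝ → ℝ} {a b : ℝ} (hab : a ≤ b)
    (hg : ContinuousOn g (Set.Icc a b)) {ι : Type*} [Preorder ι] {v : ι → ℝ} (hv : StrictMono v)
    (hva : ∀ i, g a ≤ v i) (hvb : ∀ i, v i ≤ g b) :
    ∃ θ : ι → ℝ, StrictMono θ ∧ ∀ i, θ i ∈ Set.Icc a b ∧ g (θ i) = v i := by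
  -- `θ i` is the first time at which `g` reaches the level `v i`.
  let S : ℝ → Set ℝ := fun y => Set.Icc a b ∩ g ⁻¹' Set.Ici y
  have hS_bdd (y : ℝ) : BddBelow (S y) := ⟨a, fun t ht => ht.1.1⟩
  have hS_ne (i : ι) : (S (v i)).Nonempty := ⟨b, ⟨hab, le_rfl⟩, hvb i⟩
  have hS_mem (i : ι) : sInf (S (v i)) ∈ S (v i) :=
    (hg.preimage_isClosed_of_isClosed isClosed_Icc isClosed_Ici).csInf_mem (hS_ne i) (hS_bdd _)
  have hθ_eq (i : ι) : g (sInf (S (v i))) = v i := by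
    obtain ⟨⟨ha', hb'⟩, hge⟩ := hS_mem i
    obtain ⟨t, ht, hgt⟩ := intermediate_value_Icc ha' (hg.mono (Set.Icc_subset_Icc_right hb'))
      ⟨hva i, hge⟩
    have : sInf (S (v i)) ≤ t := csInf_le (hS_bdd _) ⟨⟨ht.1, ht.2.trans hb'⟩, hgt.ge⟩
    rwa [← le_antisymm ht.2 this]
  refine ⟨fun i => sInf (S (v i)), fun i j hij => ?_, fun i => ⟨(hS_mem i).1, hθ_eq i⟩⟩
  refine (csInf_le_csInf (hS_bdd _) (hS_ne j) fun _ ht => ⟨ht.1, (hv hij).le.trans ht.2⟩).lt_of_ne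
    fun h => (hv hij).ne ?_
  rw [← hθ_eq i, ← hθ_eq j, h]

theorem exists_le_abs_sub_eval_of_alternation {f : ℝ → ℝ} {P Q : ℝ[X]} {n : ℕ}
    (hP : P.natDegree ≤ n) (hQ : Q.natDegree ≤ n) {x : Fin (n + 2) → ℝ} (hx : StrictMono x)
    {c : ℝ} (halt : ∀ i, f (x i) - P.eval (x i) = (-1) ^ (i : ℕ) * c) :
    ∃ i, |c| ≤ |f (x i) - Q.eval (x i)| := by
  by_contra! hlt
  set r := Q - P
  have hsign (i : Fin (n + 2)) : 0 < (-1) ^ (i : ℕ) * c * r.eval (x i) := by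
    have hr : r.eval (x i) = (-1) ^ (i : ℕ) * c - (f (x i) - Q.eval (x i)) := by
      rw [← halt i, eval_sub]; ring
    have hsq : ((-1 : ℝ) ^ (i : ℕ)) ^ 2 = 1 := by
      rw [← pow_mul, mul_comm, pow_mul, neg_one_sq, one_pow]
    have hle := le_abs_self ((-1) ^ (i : ℕ) * c * (f (x i) - Q.eval (x i)))
    rw [abs_mul, abs_mul, abs_pow, abs_neg, abs_one, one_pow, one_mul] at hle
    rw [hr]
    nlinarith [hlt i, abs_nonneg c, abs_nonneg (f (x i) - Q.eval (x i)), sq_abs c]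
  have hroot (i : Fin (n + 1)) : ∃ y ∈ Set.Ioo (x i.castSucc) (x i.succ), r.IsRoot y := by
    set σ : ℝ := (-1) ^ (i : ℕ) * c
    have h₀ : 0 < σ * r.eval (x i.castSucc) := hsign i.castSucc
    have h₁ : 0 < -(σ * r.eval (x i.succ)) := by
      have := hsign i.succ
      rw [Fin.val_succ, pow_succ] at this
      linarith
    obtain ⟨y, hy, hy0⟩ := intermediate_value_Ioo' (hx (Fin.castSucc_lt_succ (i := i))).le
      (by fun_prop : Continuous fun y => σ * r.eval y).continuousOn ⟨by linarith, h₀⟩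
    have hσ : σ ≠ 0 := by rintro h; simp [h] at h₀
    exact ⟨y, hy, by simpa [hσ] using hy0⟩
  choose y hy hyr using hroot
  have hy_mono : StrictMono y := Fin.strictMono_iff_lt_succ.2 fun i =>
    (hy _).2.trans (by rw [Fin.succ_castSucc]; exact (hy _).1)
  have hr0 : r = 0 := eq_zero_of_natDegree_lt_card_of_eval_eq_zero r hy_mono.injective hyr
    (by rw [Fintype.card_fin]
        exact Nat.lt_succ_of_le ((natDegree_sub_le Q P).trans (max_le hQ hP)))
  have := hlt 0
  rw [show Q = P from sub_eq_zero.1 hr0, halt] at this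
  simp at this

noncomputable def blaschkeArg (η : ℝ) (m : ℕ) (θ : ℝ) : ℝ :=
  (m + 1) * θ - 2 * arg (1 - η * exp (θ * I))

theorem blaschke_exp_mul_I (η θ : ℝ) (m : ℕ) (hw : 1 - η * exp (θ * I) ≠ 0) :
    exp (θ * I) ^ m * (exp (θ * I) - η) / (1 - η * exp (θ * I)) =
      exp (blaschkeArg η m θ * I) := by
  set z := exp (θ * I)
  set w := 1 - η * z
  -- On the unit circle `z - η = z * conj w`, so the quotient is `z ^ (m + 1) * conj w / w`.
  have hz : z * conj z = 1 := by
    rw [mul_conj, normSq_eq_norm_sq, norm_exp_ofReal_mul_I, one_pow, ofReal_one]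
  have hzw : z - η = z * conj w := by
    simp only [w, map_sub, map_one, map_mul, conj_ofReal]
    linear_combination (η : ℂ) * hz
  have hw_polar : w = ‖w‖ * exp (arg w * I) := (norm_mul_exp_arg_mul_I w).symm
  have hcw_polar : conj w = ‖w‖ * exp (-arg w * I) := by
    conv_lhs => rw [hw_polar]
    rw [map_mul, conj_ofReal, ← exp_conj, map_mul, conj_ofReal, conj_I]; ring_nf
  rw [div_eq_iff hw, hzw, hcw_polar, blaschkeArg]
  set A := arg w
  set r := ‖w‖
  rw [hw_polar, ← exp_nat_mul]
  have hexp : exp (((m + 1) * θ - 2 * A : ℝ) * I) * exp (A * I) =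
      exp (m * (θ * I)) * z * exp (-A * I) := by
    simp only [z, ← exp_add]; push_cast; ring_nf
  linear_combination (-r : ℂ) * hexp

theorem one_sub_mul_exp_mem_slitPlane {η : ℝ} (hη1 : |η| < 1) (θ : ℝ) :
    1 - η * exp (θ * I) ∈ slitPlane := by
  rw [sub_eq_add_neg]
  exact mem_slitPlane_of_norm_lt_one (by simpa [norm_exp_ofReal_mul_I] using hη1)

theorem continuous_blaschkeArg {η : ℝ} (hη1 : |η| < 1) (m : ℕ) : Continuous (blaschkeArg η m) := by
  have harg : Continuous fun θ : ℝ => arg (1 - η * exp (θ * I)) :=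
    continuousOn_arg.comp_continuous (by fun_prop) (one_sub_mul_exp_mem_slitPlane hη1)
  unfold blaschkeArg
  fun_prop

theorem blaschkeArg_zero {η : ℝ} (hη1 : η < 1) (m : ℕ) : blaschkeArg η m 0 = 0 := by
  have : (1 - η * exp ((0 : ℝ) * I) : ℂ) = ((1 - η : ℝ) : ℂ) := by simp
  rw [blaschkeArg, this, arg_ofReal_of_nonneg (by linarith)]
  ring

theorem blaschkeArg_pi {η : ℝ} (hη1 : -1 < η) (m : ℕ) :
    blaschkeArg η m Real.pi = (m + 1) * Real.pi := by
  have : (1 - η * exp (Real.pi * I) : ℂ) = ((1 + η : ℝ) : ℂ) := by simp [exp_pi_mul_I]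
  rw [blaschkeArg, this, arg_ofReal_of_nonneg (by linarith)]
  ring

theorem inv_sub_partial_sum_eq_blaschke {K : Type*} [Field K] {η : K} (z : K) {m : ℕ} (hη : η ≠ 0)
    (hη1 : η ^ 2 ≠ 1) (hm : m ≠ 0) (hz : 1 - η * z ≠ 0) :
    (4 / (η - η⁻¹) / (1 - η * z) - 2 / (η - η⁻¹)) -
      (-2 / (η - η⁻¹) + 4 / (η - η⁻¹) * ∑ j ∈ Finset.range m, η ^ j * z ^ j -
        4 * η ^ (m - 1) / (η - η⁻¹) ^ 2 * z ^ m) =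
      -(4 * η ^ m / (η - η⁻¹) ^ 2) * (z ^ m * (z - η) / (1 - η * z)) := by
  have hgeom := geom_sum_mul (η * z) m
  simp only [mul_pow] at hgeom
  obtain ⟨k, rfl⟩ := Nat.exists_eq_add_one_of_ne_zero hm
  set d := η - η⁻¹ with hd_def
  have hdη : d * η = η ^ 2 - 1 := by rw [hd_def, sub_mul, inv_mul_cancel₀ hη]; ring
  have hd : d ≠ 0 := by
    rintro h; rw [h, zero_mul, eq_comm, sub_eq_zero] at hdη; exact hη1 hdη
  clear_value d
  rw [Nat.add_sub_cancel]
  field_simp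
  linear_combination (4 * d) * hgeom + 4 * η ^ k * z ^ (k + 1) * hdη

noncomputable def invApprox (η : ℝ) (m : ℕ) : ℝ[X] :=
  C (-2 / (η - η⁻¹)) + C (4 / (η - η⁻¹)) * ∑ j ∈ Finset.range m, C (η ^ j) * T ℝ j -
    C (4 * η ^ (m - 1) / (η - η⁻¹) ^ 2) * T ℝ m

theorem natDegree_invApprox_le (η : ℝ) (m : ℕ) : (invApprox η m).natDegree ≤ m := by
  have hT (c : ℝ) (j : ℕ) (hj : j ≤ m) : (C c * T ℝ j).natDegree ≤ m :=
    (natDegree_C_mul_le _ _).trans (by rw [natDegree_T]; exact hj)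
  refine (natDegree_sub_le_of_le (natDegree_add_le_of_degree_le
    ((natDegree_C _).trans_le m.zero_le)
    ((natDegree_C_mul_le _ _).trans (natDegree_sum_le_of_forall_le _ _ fun j hj =>
      hT _ j (Finset.mem_range.1 hj).le))) (hT _ m le_rfl)).trans (max_self m).le

theorem eval_invApprox_cos (η θ : ℝ) (m : ℕ) :
    (invApprox η m).eval (Real.cos θ) =
      (((-2 / (η - η⁻¹) : ℝ) : ℂ) + ((4 / (η - η⁻¹) : ℝ) : ℂ) *
        ∑ j ∈ Finset.range m, ((η ^ j : ℝ) : ℂ) * exp (θ * I) ^ j -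
          ((4 * η ^ (m - 1) / (η - η⁻¹) ^ 2 : ℝ) : ℂ) * exp (θ * I) ^ m).re := by
  have hre (n : ℕ) : (exp (θ * I) ^ n).re = Real.cos (n * θ) := by
    rw [← exp_nat_mul, ← mul_assoc, ← ofReal_natCast, ← ofReal_mul, exp_ofReal_mul_I_re]
  simp only [invApprox, eval_add, eval_sub, eval_mul, eval_C, eval_finsetSum, T_real_cos,
    Int.cast_natCast, add_re, sub_re, re_ofReal_mul, ofReal_re, re_sum, hre]

section

-- `η + η⁻¹ = -2 * a` says that `-η` is one of the roots `a ± √(a² - 1)` of `x² - 2ax + 1`.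
variable {η a : ℝ}

theorem two_mul_mul_add_eq (hη : η ≠ 0) (ha : η + η⁻¹ = -2 * a) (t : ℝ) :
    2 * η * (t + a) = -(1 - 2 * η * t + η ^ 2) := by
  linear_combination η * ha - mul_inv_cancel₀ hη

theorem one_sub_two_mul_add_sq_pos (hη1 : |η| < 1) {t : ℝ} (ht : |t| ≤ 1) :
    0 < 1 - 2 * η * t + η ^ 2 := by
  nlinarith [abs_le.1 ht, abs_nonneg η, le_abs_self η, neg_abs_le η, sq_abs η]

theorem sq_sub_inv_eq (hη : η ≠ 0) (ha : η + η⁻¹ = -2 * a) :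
    (η - η⁻¹) ^ 2 = 4 * (a ^ 2 - 1) := by
  have := mul_inv_cancel₀ hη
  linear_combination (η + η⁻¹ - 2 * a) * ha - 4 * this

theorem sq_sub_one_pos (hη : η ≠ 0) (hη1 : |η| < 1) (ha : η + η⁻¹ = -2 * a) :
    0 < a ^ 2 - 1 := by
  have hη2 := (sq_lt_one_iff_abs_lt_one η).2 hη1
  have hd : η - η⁻¹ ≠ 0 := by
    rw [show η - η⁻¹ = (η ^ 2 - 1) / η by field_simp]
    exact div_ne_zero (by linarith) hη
  nlinarith [sq_sub_inv_eq hη ha, sq_pos_of_ne_zero hd]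

theorem inv_cos_add_eq_re (hη : η ≠ 0) (hη1 : |η| < 1) (ha : η + η⁻¹ = -2 * a) (θ : ℝ) :
    1 / (Real.cos θ + a) =
      (((4 / (η - η⁻¹) : ℝ) : ℂ) / (1 - η * exp (θ * I)) - ((2 / (η - η⁻¹) : ℝ) : ℂ)).re := by
  have hN := (one_sub_two_mul_add_sq_pos hη1 (Real.abs_cos_le_one θ)).ne'
  have hnormSq : normSq (1 - η * exp (θ * I)) = 1 - 2 * η * Real.cos θ + η ^ 2 := by
    rw [normSq_apply]
    simp only [sub_re, one_re, re_ofReal_mul, exp_ofReal_mul_I_re, sub_im, one_im, im_ofReal_mul,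
      exp_ofReal_mul_I_im]
    linear_combination η ^ 2 * Real.sin_sq_add_cos_sq θ
  have hca : Real.cos θ + a = -(1 - 2 * η * Real.cos θ + η ^ 2) / (2 * η) := by
    rw [eq_div_iff (by positivity), mul_comm, two_mul_mul_add_eq hη ha]
  have hη2 : η ^ 2 - 1 ≠ 0 := by linarith [(sq_lt_one_iff_abs_lt_one η).2 hη1]
  rw [sub_re, ofReal_re, div_re, ofReal_re, ofReal_im, zero_mul, zero_div, add_zero, hnormSq,
    sub_re, one_re, re_ofReal_mul, exp_ofReal_mul_I_re, hca]
  field_simp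
  ring

theorem inv_cos_add_sub_eval_invApprox (hη : η ≠ 0) (hη1 : |η| < 1) (ha : η + η⁻¹ = -2 * a)
    {m : ℕ} (hm : m ≠ 0) (θ : ℝ) :
    1 / (Real.cos θ + a) - (invApprox η m).eval (Real.cos θ) =
      -(η ^ m / (a ^ 2 - 1)) * Real.cos (blaschkeArg η m θ) := by
  have hw := slitPlane_ne_zero (one_sub_mul_exp_mem_slitPlane hη1 θ)
  have hη2 : (η : ℂ) ^ 2 ≠ 1 := by
    exact_mod_cast ((sq_lt_one_iff_abs_lt_one η).2 hη1).ne
  have hK : η ^ m / (a ^ 2 - 1) = 4 * η ^ m / (η - η⁻¹) ^ 2 := by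
    rw [sq_sub_inv_eq hη ha, mul_div_mul_left _ _ four_ne_zero]
  rw [inv_cos_add_eq_re hη hη1 ha, eval_invApprox_cos, ← sub_re, ← exp_ofReal_mul_I_re,
    ← blaschke_exp_mul_I η θ m hw, ← re_ofReal_mul, hK]
  congr 1
  push_cast
  linear_combination inv_sub_partial_sum_eq_blaschke (exp (θ * I)) (ofReal_ne_zero.2 hη) hη2 hm hw

theorem add_ne_zero_of_mem_Icc (hη : η ≠ 0) (hη1 : |η| < 1) (ha : η + η⁻¹ = -2 * a) {t : ℝ}
    (ht : t ∈ Set.Icc (-1) 1) : t + a ≠ 0 := by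
  intro h
  have := two_mul_mul_add_eq hη ha t
  rw [h, mul_zero] at this
  linarith [one_sub_two_mul_add_sq_pos hη1 (abs_le.2 ht)]

theorem isGreatest_abs_inv_add_sub_eval_invApprox (hη : η ≠ 0) (hη1 : |η| < 1)
    (ha : η + η⁻¹ = -2 * a) {m : ℕ} (hm : m ≠ 0) :
    IsGreatest ((fun t : ℝ => |1 / (t + a) - (invApprox η m).eval t|) '' Set.Icc (-1) 1)
      (|η| ^ m / (a ^ 2 - 1)) := by
  have herr (θ : ℝ) : |1 / (Real.cos θ + a) - (invApprox η m).eval (Real.cos θ)| =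
      |η| ^ m / (a ^ 2 - 1) * |Real.cos (blaschkeArg η m θ)| := by
    rw [inv_cos_add_sub_eval_invApprox hη hη1 ha hm, abs_mul, abs_neg, abs_div, abs_pow,
      abs_of_pos (sq_sub_one_pos hη hη1 ha)]
  refine ⟨⟨1, ⟨by norm_num, le_rfl⟩, ?_⟩, ?_⟩
  · simpa [blaschkeArg_zero (abs_lt.1 hη1).2] using herr 0
  · rintro _ ⟨t, ht, rfl⟩
    dsimp only
    rw [← Real.cos_arccos ht.1 ht.2, herr]
    exact mul_le_of_le_one_right (div_nonneg (by positivity) (sq_sub_one_pos hη hη1 ha).le)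
      (Real.abs_cos_le_one _)

theorem exists_alternation_invApprox (hη : η ≠ 0) (hη1 : |η| < 1) (ha : η + η⁻¹ = -2 * a)
    {m : ℕ} (hm : m ≠ 0) :
    ∃ x : Fin (m + 2) → ℝ, StrictMono x ∧ (∀ i, x i ∈ Set.Icc (-1) 1) ∧
      ∀ i, 1 / (x i + a) - (invApprox η m).eval (x i) =
        (-1) ^ (i : ℕ) * ((-η) ^ m / (a ^ 2 - 1)) := by
  obtain ⟨hη_lo, hη_hi⟩ := abs_lt.1 hη1
  have hg : Continuous fun t => -blaschkeArg η m (Real.arccos t) :=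
    ((continuous_blaschkeArg hη1 m).comp Real.continuous_arccos).neg
  have hv : StrictMono fun i : Fin (m + 2) => -((m + 1) * Real.pi) + i * Real.pi :=
    fun i j hij => by
      have : (i : ℝ) < j := Nat.cast_lt.2 hij
      dsimp only
      nlinarith [Real.pi_pos]
  have hva (i : Fin (m + 2)) :
      -blaschkeArg η m (Real.arccos (-1)) ≤ -((m + 1) * Real.pi) + i * Real.pi := by
    rw [Real.arccos_neg_one, blaschkeArg_pi hη_lo]
    nlinarith [Real.pi_pos, (Nat.cast_nonneg i : (0 : ℝ) ≤ i)]
  have hvb (i : Fin (m + 2)) :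
      -((m + 1) * Real.pi) + i * Real.pi ≤ -blaschkeArg η m (Real.arccos 1) := by
    rw [Real.arccos_one, blaschkeArg_zero hη_hi]
    have : (i : ℝ) ≤ m + 1 := by exact_mod_cast Nat.lt_succ_iff.1 i.isLt
    nlinarith [Real.pi_pos]
  -- `x i` is a point where the phase of the error equals `(m + 1 - i)π`.
  obtain ⟨x, hx, hxg⟩ := exists_strictMono_eq_of_continuousOn (show (-1 : ℝ) ≤ 1 by norm_num)
    hg.continuousOn hv hva hvb
  refine ⟨x, hx, fun i => (hxg i).1, fun i => ?_⟩
  obtain ⟨⟨hx_lo, hx_hi⟩, hgx⟩ := hxg i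
  have hcos : Real.cos (blaschkeArg η m (Real.arccos (x i))) = (-1) ^ (i : ℕ) * (-1) ^ (m + 1) := by
    rw [← Real.cos_neg, hgx, Real.cos_add_nat_mul_pi, Real.cos_neg,
      ← Real.cos_nat_mul_pi (m + 1), Nat.cast_succ]
  rw [← Real.cos_arccos hx_lo hx_hi, inv_cos_add_sub_eval_invApprox hη hη1 ha hm, hcos, neg_pow]
  ring

theorem div_le_sSup_abs_inv_add_sub_eval (hη : η ≠ 0) (hη1 : |η| < 1) (ha : η + η⁻¹ = -2 * a)
    {m : ℕ} (hm : m ≠ 0) {Q : ℝ[X]} (hQ : Q.natDegree ≤ m) :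
    |η| ^ m / (a ^ 2 - 1) ≤ sSup ((fun t : ℝ => |1 / (t + a) - Q.eval t|) '' Set.Icc (-1) 1) := by
  obtain ⟨x, hx, hxI, halt⟩ := exists_alternation_invApprox hη hη1 ha hm
  obtain ⟨i, hi⟩ := exists_le_abs_sub_eval_of_alternation (f := fun t => 1 / (t + a))
    (natDegree_invApprox_le η m) hQ hx halt
  have hcont : ContinuousOn (fun t : ℝ => |1 / (t + a) - Q.eval t|) (Set.Icc (-1) 1) :=
    ((continuousOn_const.div (by fun_prop) fun t ht => add_ne_zero_of_mem_Icc hη hη1 ha ht).sub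
      Q.continuous.continuousOn).abs
  calc |η| ^ m / (a ^ 2 - 1) = |(-η) ^ m / (a ^ 2 - 1)| := by
        rw [abs_div, abs_pow, abs_neg, abs_of_pos (sq_sub_one_pos hη hη1 ha)]
    _ ≤ _ := hi
    _ ≤ _ := le_csSup (isCompact_Icc.image_of_continuousOn hcont).bddAbove ⟨x i, hxI i, rfl⟩

end

theorem best_approx_inv_explicit (a : ℝ) (ha : 1 < a)
    (δ η : ℝ) (hδ : δ = a - Real.sqrt (a ^ 2 - 1)) (hη : η = -δ)
    (m : ℕ) (hm : 1 ≤ m)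
    (Qm : Polynomial ℝ)
    (hQm : Qm = C (-2 / (η - η⁻¹)) +
        C (4 / (η - η⁻¹)) * ∑ j ∈ Finset.range m, C (η ^ j) * T ℝ j -
        C (4 * η ^ (m - 1) / (η - η⁻¹) ^ 2) * T ℝ m) :
    Qm.degree ≤ (m : ℕ) ∧
    sSup ((fun t : ℝ => |1 / (t + a) - Qm.eval t|) '' Set.Icc (-1 : ℝ) 1) =
      δ ^ m / (a ^ 2 - 1) ∧
    ∀ Q : Polynomial ℝ, Q.degree ≤ (m : ℕ) →
      sSup ((fun t : ℝ => |1 / (t + a) - Qm.eval t|) '' Set.Icc (-1 : ℝ) 1) ≤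
        sSup ((fun t : ℝ => |1 / (t + a) - Q.eval t|) '' Set.Icc (-1 : ℝ) 1) := by
  set s := Real.sqrt (a ^ 2 - 1)
  have hs : s ^ 2 = a ^ 2 - 1 := Real.sq_sqrt (by nlinarith)
  have hs0 : 0 < s := Real.sqrt_pos.2 (by nlinarith)
  have hδs : δ * (a + s) = 1 := by rw [hδ]; linear_combination -hs
  have hδ0 : 0 < δ := by nlinarith
  have hδ1 : δ < 1 := by nlinarith
  have hη0 : η ≠ 0 := by rw [hη]; exact neg_ne_zero.2 hδ0.ne'
  have habs : |η| = δ := by rw [hη, abs_neg, abs_of_pos hδ0]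
  have hη1 : |η| < 1 := habs ▸ hδ1
  have hηa : η + η⁻¹ = -2 * a := by
    rw [hη, inv_neg, ← eq_inv_of_mul_eq_one_right hδs, hδ]; ring
  have hm0 : m ≠ 0 := Nat.one_le_iff_ne_zero.1 hm
  have hmax := isGreatest_abs_inv_add_sub_eval_invApprox hη0 hη1 hηa hm0
  rw [habs] at hmax
  replace hQm : Qm = invApprox η m := hQm
  subst hQm
  refine ⟨degree_le_of_natDegree_le (natDegree_invApprox_le η m), hmax.csSup_eq, fun Q hQ => ?_⟩
  rw [hmax.csSup_eq, ← habs]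
  exact div_le_sSup_abs_inv_add_sub_eval hη0 hη1 hηa hm0 (natDegree_le_of_degree_le hQ)
end

section
/- Let a > 1 be real, δ := a − √(a² − 1), η := −δ, and for m ≥ 1 let Q_m(t) := −2/(η − η⁻¹) + (4/(η − η⁻¹)) Σ_{j=0}^{m−1} ηʲ T_j(t) − (4 η^{m−1}/(η − η⁻¹)²) T_m(t), and R_{m+1}(t) := η⁻¹ T_{m+1}(t) − 2 T_m(t) + η T_{m−1}(t), where T_j is the Chebyshev polynomial of the first kind of degree j. Then the polynomial identity (t + a) · Q_m(t) = 1 − (2 ηᵐ/(η − η⁻¹)²) · R_{m+1}(t) holds for all t. -/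
/-!
Because `η + η⁻¹ = -2a`, we have `2(t + a) = 2t - (η + η⁻¹)`, and the Chebyshev recurrence
`2t T_j = T_{j+1} + T_{j-1}` makes `(2t - η - η⁻¹) ∑_{j<m} ηʲ T_j` telescope to
`η^{m-1} T_m - ηᵐ T_{m-1} - η⁻¹ + t`. What remains is a comparison of the coefficients of
`1`, `T_{m-1}`, `T_m` and `t T_m`, which holds over any field as soon as `η ≠ η⁻¹`.
-/

open Polynomial
open Polynomial.Chebyshev (T T_add_two)

section

variable {K : Type*} [Field K]

theorem two_mul_X_sub_C_mul_sum_pow_mul_chebyshevT {η : K} (hη : η ≠ 0) (k : ℕ) :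
    (2 * X - C (η + η⁻¹)) * ∑ j ∈ Finset.range (k + 1), C (η ^ j) * T K j =
      C (η ^ k) * T K ((k : ℤ) + 1) - C (η ^ (k + 1)) * T K k - C η⁻¹ + X := by
  have hηη : C η * C η⁻¹ = (1 : K[X]) := by rw [← C_mul, mul_inv_cancel₀ hη, C_1]
  induction k with
  | zero => simp [C_add]; ring
  | succ k ih =>
    rw [Finset.sum_range_succ, mul_add, ih]
    push_cast
    rw [show (k : ℤ) + 1 + 1 = k + 2 by ring, T_add_two]
    simp only [C_pow, C_add]
    linear_combination (-(C η ^ k * T K ((k : ℤ) + 1))) * hηη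

theorem X_add_C_mul_chebyshev_bestApprox_eq {a η : K} (hd : η - η⁻¹ ≠ 0)
    (ha : 2 * a = -(η + η⁻¹)) (k : ℕ) :
    (X + C a) * (C (-2 / (η - η⁻¹)) +
        C (4 / (η - η⁻¹)) * ∑ j ∈ Finset.range (k + 1), C (η ^ j) * T K j -
        C (4 * η ^ k / (η - η⁻¹) ^ 2) * T K ((k : ℤ) + 1)) =
      1 - C (2 * η ^ (k + 1) / (η - η⁻¹) ^ 2) *
        (C η⁻¹ * T K ((k : ℤ) + 2) - 2 * T K ((k : ℤ) + 1) + C η * T K k) := by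
  have hη : η ≠ 0 := by rintro rfl; simp at hd
  have hsum := two_mul_X_sub_C_mul_sum_pow_mul_chebyshevT hη k
  have hηη : C η * C η⁻¹ = (1 : K[X]) := by rw [← C_mul, mul_inv_cancel₀ hη, C_1]
  have hdd : (C η - C η⁻¹) * C (η - η⁻¹)⁻¹ = (1 : K[X]) := by
    rw [← C_sub, ← C_mul, mul_inv_cancel₀ hd, C_1]
  have ha' : 2 * C a = -(C η + C η⁻¹) := by
    rw [← C_add, ← C_neg, ← ha, C_mul, C_ofNat]
  rw [T_add_two]
  simp only [div_eq_mul_inv, ← inv_pow, C_mul, C_pow, C_neg, C_ofNat, C_add] at hsum ⊢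
  set e := C η
  set u := C η⁻¹
  set v := C (η - η⁻¹)⁻¹
  set S := ∑ j ∈ Finset.range (k + 1), e ^ j * T K j
  set A := T K ((k : ℤ) + 1)
  linear_combination (-v + 2 * v * S - 2 * e ^ k * v ^ 2 * A) * ha' + 2 * v * hsum +
    4 * e ^ k * v ^ 2 * X * A * hηη + (1 - 2 * e ^ k * v * A + 2 * e ^ k * v * e * T K k) * hdd

end

theorem Real.sub_sqrt_mul_add_sqrt {a : ℝ} (ha : 1 ≤ a ^ 2) :
    (a - √(a ^ 2 - 1)) * (a + √(a ^ 2 - 1)) = 1 := by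
  linear_combination -Real.sq_sqrt (sub_nonneg.2 ha)

open Polynomial.Chebyshev

theorem best_approx_closed_form (a : ℝ) (ha : 1 < a)
    (δ η : ℝ) (hδ : δ = a - Real.sqrt (a ^ 2 - 1)) (hη : η = -δ)
    (m : ℕ) (hm : 1 ≤ m)
    (Qm Rm1 : Polynomial ℝ)
    (hQm : Qm = C (-2 / (η - η⁻¹)) +
        C (4 / (η - η⁻¹)) * ∑ j ∈ Finset.range m, C (η ^ j) * T ℝ j -
        C (4 * η ^ (m - 1) / (η - η⁻¹) ^ 2) * T ℝ m)
    (hRm1 : Rm1 = C η⁻¹ * T ℝ ((m : ℤ) + 1) - 2 * T ℝ (m : ℤ) +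
        C η * T ℝ ((m : ℤ) - 1)) :
    (X + C a) * Qm = 1 - C (2 * η ^ m / (η - η⁻¹) ^ 2) * Rm1 := by
  obtain ⟨k, rfl⟩ := Nat.exists_eq_add_of_le' hm
  have hδ_inv : δ⁻¹ = a + √(a ^ 2 - 1) :=
    inv_eq_of_mul_eq_one_right (hδ ▸ Real.sub_sqrt_mul_add_sqrt (by nlinarith))
  have hsqrt_pos : 0 < √(a ^ 2 - 1) := Real.sqrt_pos.2 (by nlinarith)
  have hd : η - η⁻¹ ≠ 0 := by
    rw [hη, inv_neg, hδ_inv, hδ]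
    linarith
  have hsum : 2 * a = -(η + η⁻¹) := by
    rw [hη, inv_neg, hδ_inv, hδ]
    ring
  subst hQm hRm1
  push_cast
  rw [show (k : ℤ) + 1 + 1 = k + 2 by ring, add_sub_cancel_right]
  exact X_add_C_mul_chebyshev_bestApprox_eq hd hsum k
end

section
/- Let a > 1 be real, δ := a − √(a² − 1), and η := −δ. Define Q₀(t) := a/(a² − 1), Q₁(t) := 1/√(a² − 1) − t/(a² − 1), and for m ≥ 1, Q_m(t) := −2/(η − η⁻¹) + (4/(η − η⁻¹)) Σ_{j=0}^{m−1} ηʲ T_j(t) − (4 η^{m−1}/(η − η⁻¹)²) T_m(t), where T_j is the Chebyshev polynomial of the first kind of degree j. Then the three-term recurrence relation η⁻¹ Q_{m+2}(t) − 2t Q_{m+1}(t) + η Q_m(t) = −2 holds as a polynomial identity for all m ≥ 0. -/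
/-!
Write `Q_m = A + B S_m - D η^{m-1} T_m` with `S_m = ∑_{j<m} η^j T_j`. The operator
`P ↦ η⁻¹ P_{m+2} - 2t P_{m+1} + η P_m` kills `η^m T_m` by the Chebyshev recurrence, hence is
constant (equal to `η⁻¹ - t`) on the partial sums `S_m`, and sends constants `A` to
`A (η + η⁻¹ - 2t)`; the choice of `A` and `B` makes the sum `-2`. With `η⁻¹` in place of
`η^{m-1}`, the formula at `m = 0` gives exactly `Q₀ = a / (a² - 1)`, since `η⁻¹ = -(a + √(a² - 1))`.
-/

open Polynomial
open Polynomial.Chebyshev (T T_add_two T_zero T_one)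

namespace BestApprox

variable {R : Type*} [Field R]

noncomputable def threeTerm (η : R) (P : ℕ → R[X]) (m : ℕ) : R[X] :=
  C η⁻¹ * P (m + 2) - 2 * X * P (m + 1) + C η * P m

theorem threeTerm_partialSum_succ (η : R) (P : ℕ → R[X]) (m : ℕ) :
    threeTerm η (fun n => ∑ j ∈ Finset.range n, P j) (m + 1) =
      threeTerm η (fun n => ∑ j ∈ Finset.range n, P j) m + threeTerm η P m := by
  simp only [threeTerm, Finset.sum_range_succ]
  ring

theorem threeTerm_geom_mul_T {η : R} (hη : η ≠ 0) (m : ℕ) :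
    threeTerm η (fun n => C (η ^ n) * T R n) m = 0 := by
  have hT : T R (m + 2) = 2 * X * T R (m + 1) - T R m := by exact_mod_cast T_add_two R m
  have hinv : C η⁻¹ * C (η ^ (m + 2)) = C (η ^ (m + 1)) := by
    rw [← C_mul, pow_succ' η (m + 1), inv_mul_cancel_left₀ hη]
  simp only [threeTerm, Nat.cast_add, Nat.cast_ofNat, Nat.cast_one, pow_succ, map_mul] at hinv ⊢
  linear_combination (T R (m + 2)) * hinv + C (η ^ m) * C η * hT

noncomputable def chebGeomSum (η : R) (m : ℕ) : R[X] :=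
  ∑ j ∈ Finset.range m, C (η ^ j) * T R j

theorem threeTerm_chebGeomSum {η : R} (hη : η ≠ 0) (m : ℕ) :
    threeTerm η (chebGeomSum η) m = C η⁻¹ - X := by
  induction m with
  | zero =>
    have hinv : C η⁻¹ * C η = (1 : R[X]) := by rw [← C_mul, inv_mul_cancel₀ hη, C_1]
    simp only [threeTerm, chebGeomSum, Finset.sum_range_succ, Finset.sum_range_zero, pow_zero,
      pow_one, C_1, Nat.cast_zero, Nat.cast_one, T_zero, T_one]
    linear_combination X * hinv
  | succ m ih =>
    change threeTerm η (fun n => ∑ j ∈ Finset.range n, C (η ^ j) * T R j) (m + 1) = _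
    rw [threeTerm_partialSum_succ, threeTerm_geom_mul_T hη, add_zero]
    exact ih

/-- `η^{m-1}` is written `η⁻¹ * η^m`, so that `m = 0` also gives `Q₀`. -/
noncomputable def bestApproxPoly (η : R) (m : ℕ) : R[X] :=
  C (-2 / (η - η⁻¹)) + C (4 / (η - η⁻¹)) * chebGeomSum η m
    - C (4 * η⁻¹ / (η - η⁻¹) ^ 2) * (C (η ^ m) * T R m)

theorem ne_zero_of_sub_inv_ne_zero {η : R} (hη : η - η⁻¹ ≠ 0) : η ≠ 0 := by
  rintro rfl
  simp at hη

theorem threeTerm_bestApproxPoly {η : R} (hη : η - η⁻¹ ≠ 0) (m : ℕ) :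
    threeTerm η (bestApproxPoly η) m = C (-2) := by
  have hη0 := ne_zero_of_sub_inv_ne_zero hη
  set A := -2 / (η - η⁻¹)
  set B := 4 / (η - η⁻¹)
  have hS := threeTerm_chebGeomSum hη0 m
  have hG := threeTerm_geom_mul_T hη0 m
  have hconst : A * (η⁻¹ + η) + B * η⁻¹ = -2 := by
    rw [show A * (η⁻¹ + η) + B * η⁻¹ = -2 * (η - η⁻¹) / (η - η⁻¹) by simp only [A, B]; ring,
      mul_div_assoc, div_self hη, mul_one]
  have hlin : 2 * A + B = 0 := by simp only [A, B]; ring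
  calc threeTerm η (bestApproxPoly η) m
      = C (A * (η⁻¹ + η) + B * η⁻¹) - C (2 * A + B) * X := by
        simp only [threeTerm, bestApproxPoly] at hS hG ⊢
        simp only [map_add, map_mul, map_ofNat]
        linear_combination C B * hS - C (4 * η⁻¹ / (η - η⁻¹) ^ 2) * hG
    _ = C (-2) := by rw [hconst, hlin, C_0, zero_mul, sub_zero]

theorem bestApproxPoly_of_one_le {η : R} (hη : η ≠ 0) {m : ℕ} (hm : 1 ≤ m) :
    bestApproxPoly η m = C (-2 / (η - η⁻¹)) +
      C (4 / (η - η⁻¹)) * ∑ j ∈ Finset.range m, C (η ^ j) * T R j -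
      C (4 * η ^ (m - 1) / (η - η⁻¹) ^ 2) * T R m := by
  have hpow : η⁻¹ * η ^ m = η ^ (m - 1) := by
    rw [← pow_sub_one_mul (by omega : m ≠ 0), mul_comm, mul_assoc, mul_inv_cancel₀ hη, mul_one]
  have hcoef : C (4 * η⁻¹ / (η - η⁻¹) ^ 2) * C (η ^ m) = C (4 * η ^ (m - 1) / (η - η⁻¹) ^ 2) := by
    rw [← C_mul, ← hpow]
    congr 1
    ring
  rw [bestApproxPoly, chebGeomSum, ← mul_assoc, hcoef]

end BestApprox

open BestApprox

theorem inv_neg_sub_sqrt {a : ℝ} (ha : 1 < a) :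
    (-(a - √(a ^ 2 - 1)))⁻¹ = -(a + √(a ^ 2 - 1)) := by
  have hs : √(a ^ 2 - 1) ^ 2 = a ^ 2 - 1 := Real.sq_sqrt (by nlinarith)
  refine inv_eq_of_mul_eq_one_right ?_
  linear_combination -hs

theorem neg_sub_sqrt_sub_inv {a : ℝ} (ha : 1 < a) :
    -(a - √(a ^ 2 - 1)) - (-(a - √(a ^ 2 - 1)))⁻¹ = 2 * √(a ^ 2 - 1) := by
  rw [inv_neg_sub_sqrt ha]
  ring

theorem bestApproxPoly_zero_of_sqrt {a : ℝ} (ha : 1 < a) :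
    bestApproxPoly (-(a - √(a ^ 2 - 1))) 0 = C (a / (a ^ 2 - 1)) := by
  simp only [bestApproxPoly, chebGeomSum, Finset.sum_range_zero, mul_zero, add_zero, pow_zero,
    C_1, Nat.cast_zero, T_zero, mul_one, ← C_sub]
  rw [neg_sub_sqrt_sub_inv ha, inv_neg_sub_sqrt ha]
  congr 1
  have hs0 : 0 < √(a ^ 2 - 1) := Real.sqrt_pos.mpr (by nlinarith)
  have hs : √(a ^ 2 - 1) ^ 2 = a ^ 2 - 1 := Real.sq_sqrt (by nlinarith)
  set s := √(a ^ 2 - 1)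
  rw [← hs]
  field_simp
  ring

theorem best_approx_three_term_recurrence_general (a : ℝ) (ha : 1 < a)
    (δ η : ℝ) (hδ : δ = a - Real.sqrt (a ^ 2 - 1)) (hη : η = -δ)
    (Q : ℕ → Polynomial ℝ)
    (hQ0 : Q 0 = C (a / (a ^ 2 - 1)))
    (hQm : ∀ m : ℕ, 1 ≤ m →
      Q m = C (-2 / (η - η⁻¹)) +
        C (4 / (η - η⁻¹)) * ∑ j ∈ Finset.range m, C (η ^ j) * T ℝ j -
        C (4 * η ^ (m - 1) / (η - η⁻¹) ^ 2) * T ℝ m) :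
    ∀ m : ℕ, C η⁻¹ * Q (m + 2) - 2 * X * Q (m + 1) + C η * Q m = C (-2) := by
  subst hη hδ
  have hne : -(a - √(a ^ 2 - 1)) - (-(a - √(a ^ 2 - 1)))⁻¹ ≠ 0 := by
    rw [neg_sub_sqrt_sub_inv ha]
    exact mul_ne_zero two_ne_zero (Real.sqrt_pos.mpr (by nlinarith)).ne'
  have hQ : ∀ m, Q m = bestApproxPoly (-(a - √(a ^ 2 - 1))) m := by
    intro m
    rcases Nat.eq_zero_or_pos m with rfl | hm
    · rw [hQ0, bestApproxPoly_zero_of_sqrt ha]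
    · rw [hQm m hm, bestApproxPoly_of_one_le (ne_zero_of_sub_inv_ne_zero hne) hm]
  intro m
  simpa only [threeTerm, hQ] using threeTerm_bestApproxPoly hne m

theorem best_approx_three_term_recurrence (a : ℝ) (ha : 1 < a)
    (δ η : ℝ) (hδ : δ = a - Real.sqrt (a ^ 2 - 1)) (hη : η = -δ)
    (Q : ℕ → Polynomial ℝ)
    (hQ0 : Q 0 = C (a / (a ^ 2 - 1)))
    (hQ1 : Q 1 = C (1 / Real.sqrt (a ^ 2 - 1)) - C (1 / (a ^ 2 - 1)) * X)
    (hQm : ∀ m : ℕ, 1 ≤ m →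
      Q m = C (-2 / (η - η⁻¹)) +
        C (4 / (η - η⁻¹)) * ∑ j ∈ Finset.range m, C (η ^ j) * T ℝ j -
        C (4 * η ^ (m - 1) / (η - η⁻¹) ^ 2) * T ℝ m) :
    ∀ m : ℕ, C η⁻¹ * Q (m + 2) - 2 * X * Q (m + 1) + C η * Q m = C (-2) :=
  best_approx_three_term_recurrence_general a ha δ η hδ hη Q hQ0 hQm
end

section
/- Let a > 1 be real, δ := a − √(a² − 1), η := −δ, and for an integer m ≥ 1 define R_{m+1}(t) := η⁻¹ T_{m+1}(t) − 2 T_m(t) + η T_{m−1}(t), where T_j is the Chebyshev polynomial of the first kind of degree j. Then for all t ∈ [−1, 1], −2(t + a) ≤ R_{m+1}(t) ≤ 2(t + a). -/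
open Polynomial Polynomial.Chebyshev

theorem Rm1_linear_bounds (a : ℝ) (ha : 1 < a)
    (δ η : ℝ) (hδ : δ = a - Real.sqrt (a ^ 2 - 1)) (hη : η = -δ)
    (m : ℕ) (hm : 1 ≤ m)
    (Rm1 : Polynomial ℝ)
    (hRm1 : Rm1 = C η⁻¹ * T ℝ ((m : ℤ) + 1) - 2 * T ℝ (m : ℤ) +
        C η * T ℝ ((m : ℤ) - 1)) :
    ∀ t ∈ Set.Icc (-1 : ℝ) 1,
      -2 * (t + a) ≤ Rm1.eval t ∧ Rm1.eval t ≤ 2 * (t + a) := by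
  intro t ht
  obtain ⟨ht1, ht2⟩ := ht
  set b := Real.sqrt (a ^ 2 - 1) with hb
  have hb2 : b ^ 2 = a ^ 2 - 1 := Real.sq_sqrt (by nlinarith)
  have hb0 : 0 ≤ b := Real.sqrt_nonneg _
  have hba : b < a := by nlinarith
  have hδmul : δ * (a + b) = 1 := by rw [hδ]; nlinarith
  have hδinv : δ⁻¹ = a + b := inv_eq_of_mul_eq_one_right hδmul
  have hηinv : η⁻¹ = -(a + b) := by rw [hη, inv_neg, hδinv]
  have hηval : η = -(a - b) := by rw [hη, hδ]
  set θ := Real.arccos t with hθ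
  have hcos : Real.cos θ = t := Real.cos_arccos ht1 ht2
  have hsin0 : 0 ≤ Real.sin θ :=
    Real.sin_nonneg_of_nonneg_of_le_pi (Real.arccos_nonneg t) (Real.arccos_le_pi t)
  have hsin2 : Real.sin θ ^ 2 = 1 - t ^ 2 := by
    have := Real.sin_sq_add_cos_sq θ
    rw [hcos] at this; linarith
  have heval : Rm1.eval t =
      -(a + b) * Real.cos ((m : ℝ) * θ + θ) - 2 * Real.cos ((m : ℝ) * θ)
        + -(a - b) * Real.cos ((m : ℝ) * θ - θ) := by
    rw [hRm1]
    simp only [eval_add, eval_sub, eval_mul, eval_C, eval_ofNat, ← hcos, T_real_cos]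
    rw [hηinv, hηval]
    push_cast
    ring_nf
  rw [Real.cos_add, Real.cos_sub] at heval
  set C := Real.cos ((m : ℝ) * θ)
  set S := Real.sin ((m : ℝ) * θ)
  set s := Real.sin θ
  have hCS : S ^ 2 + C ^ 2 = 1 := Real.sin_sq_add_cos_sq _
  rw [hcos] at heval
  have hR : Rm1.eval t = -2 * ((a * t + 1) * C - b * s * S) := by
    rw [heval]; ring
  have hid : ((a * t + 1) * C - b * s * S) ^ 2 + ((a * t + 1) * S + b * s * C) ^ 2
      = (t + a) ^ 2 := by
    linear_combination ((a * t + 1) ^ 2 + b ^ 2 * s ^ 2) * hCS + s ^ 2 * hb2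
      + (a ^ 2 - 1) * hsin2
  have hP : 0 < t + a := by linarith
  have hY := sq_nonneg ((a * t + 1) * S + b * s * C)
  constructor
  · rw [hR]; nlinarith [hid, hY, hP]
  · rw [hR]; nlinarith [hid, hY, hP]
end

section
/- Let a > 1 be real, δ := a − √(a² − 1), η := −δ, and for m ≥ 1 let R_{m+1}(t) := η⁻¹ T_{m+1}(t) − 2 T_m(t) + η T_{m−1}(t), where T_j is the Chebyshev polynomial of the first kind of degree j. Then for every α ∈ [0, π], with t = cos α: R_{m+1}(cos α) + 2 cos α − η − η⁻¹ = 2 δ⁻¹ (sin((m+1)α/2) + δ sin((m−1)α/2))² ≥ 0. -/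
open Polynomial Polynomial.Chebyshev Real

theorem Rm1_lower_bound_identity (a : ℝ) (ha : 1 < a)
    (δ η : ℝ) (hδ : δ = a - Real.sqrt (a ^ 2 - 1)) (hη : η = -δ)
    (m : ℕ) (hm : 1 ≤ m)
    (Rm1 : Polynomial ℝ)
    (hRm1 : Rm1 = C η⁻¹ * T ℝ ((m : ℤ) + 1) - 2 * T ℝ (m : ℤ) +
        C η * T ℝ ((m : ℤ) - 1)) :
    ∀ α ∈ Set.Icc (0 : ℝ) π,
      Rm1.eval (Real.cos α) + 2 * Real.cos α - η - η⁻¹ =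
        2 * δ⁻¹ * (Real.sin ((m + 1) * α / 2) + δ * Real.sin ((m - 1) * α / 2)) ^ 2 ∧
      0 ≤ 2 * δ⁻¹ * (Real.sin ((m + 1) * α / 2) + δ * Real.sin ((m - 1) * α / 2)) ^ 2 := by
  have hsqrt : Real.sqrt (a ^ 2 - 1) < a := by
    have h1 : Real.sqrt (a ^ 2 - 1) < Real.sqrt (a ^ 2) :=
      Real.sqrt_lt_sqrt (by nlinarith) (by nlinarith)
    rwa [Real.sqrt_sq (by linarith)] at h1
  have hδpos : 0 < δ := by rw [hδ]; linarith
  have hδne : δ ≠ 0 := ne_of_gt hδpos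
  intro α _
  have cos2 : ∀ x : ℝ, Real.cos (2 * x) = 1 - 2 * Real.sin x ^ 2 := by
    intro x; rw [Real.cos_two_mul, Real.cos_sq']; ring
  set A := ((m : ℝ) + 1) * α / 2 with hA
  set B := ((m : ℝ) - 1) * α / 2 with hB
  have h1 : Real.cos (((m : ℝ) + 1) * α) = 1 - 2 * Real.sin A ^ 2 := by
    rw [show ((m : ℝ) + 1) * α = 2 * A by rw [hA]; ring, cos2]
  have h2 : Real.cos (((m : ℝ) - 1) * α) = 1 - 2 * Real.sin B ^ 2 := by
    rw [show ((m : ℝ) - 1) * α = 2 * B by rw [hB]; ring, cos2]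
  have h3 : Real.cos α - Real.cos ((m : ℝ) * α) = 2 * Real.sin A * Real.sin B := by
    rw [Real.cos_sub_cos]
    rw [hA, hB, show (α + (m : ℝ) * α) / 2 = ((m : ℝ) + 1) * α / 2 by ring,
      show (α - (m : ℝ) * α) / 2 = -(((m : ℝ) - 1) * α / 2) by ring, Real.sin_neg]
    ring
  have heval : Rm1.eval (Real.cos α) =
      η⁻¹ * Real.cos (((m : ℝ) + 1) * α) - 2 * Real.cos ((m : ℝ) * α)
        + η * Real.cos (((m : ℝ) - 1) * α) := by
    simp only [hRm1, eval_add, eval_sub, eval_mul, eval_C, eval_ofNat, T_real_cos]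
    push_cast
    ring
  have hηinv : η⁻¹ = -δ⁻¹ := by rw [hη, inv_neg]
  constructor
  · rw [heval, hηinv, hη, h1, h2]
    have h3' : Real.cos ((m : ℝ) * α) = Real.cos α - 2 * Real.sin A * Real.sin B := by
      linarith
    rw [h3']
    field_simp
    ring
  · positivity
end

section
/- Let a > 1 be real, δ := a − √(a² − 1), η := −δ, and for m ≥ 1 let R_{m+1}(t) := η⁻¹ T_{m+1}(t) − 2 T_m(t) + η T_{m−1}(t), where T_j is the Chebyshev polynomial of the first kind of degree j. Then for every α ∈ [0, π], with t = cos α: R_{m+1}(cos α) − 2 cos α + η + η⁻¹ = −2 δ⁻¹ (cos((m+1)α/2) + δ cos((m−1)α/2))² ≤ 0. -/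
open Polynomial Polynomial.Chebyshev Real

theorem Rm1_upper_bound_identity (a : ℝ) (ha : 1 < a)
    (δ η : ℝ) (hδ : δ = a - Real.sqrt (a ^ 2 - 1)) (hη : η = -δ)
    (m : ℕ) (hm : 1 ≤ m)
    (Rm1 : Polynomial ℝ)
    (hRm1 : Rm1 = C η⁻¹ * T ℝ ((m : ℤ) + 1) - 2 * T ℝ (m : ℤ) +
        C η * T ℝ ((m : ℤ) - 1)) :
    ∀ α ∈ Set.Icc (0 : ℝ) π,
      Rm1.eval (Real.cos α) - 2 * Real.cos α + η + η⁻¹ =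
        -2 * δ⁻¹ * (Real.cos ((m + 1) * α / 2) + δ * Real.cos ((m - 1) * α / 2)) ^ 2 ∧
      -2 * δ⁻¹ * (Real.cos ((m + 1) * α / 2) + δ * Real.cos ((m - 1) * α / 2)) ^ 2 ≤ 0 := by
  have hsq : Real.sqrt (a ^ 2 - 1) < a := by
    have h1 : Real.sqrt (a ^ 2 - 1) < Real.sqrt (a ^ 2) :=
      Real.sqrt_lt_sqrt (by nlinarith) (by nlinarith)
    rwa [Real.sqrt_sq (by linarith)] at h1
  have hδpos : 0 < δ := by rw [hδ]; linarith
  have hδne : δ ≠ 0 := hδpos.ne'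
  have hinv : δ * δ⁻¹ = 1 := mul_inv_cancel₀ hδne
  have hηinv : η⁻¹ = -δ⁻¹ := by rw [hη, inv_neg]
  intro α hα
  constructor
  · rw [hRm1]
    simp only [Polynomial.eval_add, Polynomial.eval_sub, Polynomial.eval_mul,
      Polynomial.eval_C, Polynomial.eval_ofNat, T_real_cos]
    push_cast
    have h1 : Real.cos (((m : ℝ) + 1) * α) = 2 * Real.cos (((m : ℝ) + 1) * α / 2) ^ 2 - 1 := by
      rw [← Real.cos_two_mul]; ring_nf
    have h2 : Real.cos (((m : ℝ) - 1) * α) = 2 * Real.cos (((m : ℝ) - 1) * α / 2) ^ 2 - 1 := by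
      rw [← Real.cos_two_mul]; ring_nf
    have h3 : Real.cos ((m : ℝ) * α) + Real.cos α =
        2 * Real.cos (((m : ℝ) + 1) * α / 2) * Real.cos (((m : ℝ) - 1) * α / 2) := by
      have := Real.cos_add_cos ((m : ℝ) * α) α
      have e1 : ((m : ℝ) * α + α) / 2 = ((m : ℝ) + 1) * α / 2 := by ring
      have e2 : ((m : ℝ) * α - α) / 2 = ((m : ℝ) - 1) * α / 2 := by ring
      rwa [e1, e2] at this
    rw [hη, inv_neg]
    set c1 := Real.cos (((m : ℝ) + 1) * α / 2)
    set c2 := Real.cos (((m : ℝ) - 1) * α / 2)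
    linear_combination (-δ⁻¹) * h1 + (-δ) * h2 + (-2) * h3 +
      (4 * c1 * c2 + 2 * δ * c2 ^ 2) * hinv
  · have hs := sq_nonneg (Real.cos (((m : ℝ) + 1) * α / 2) + δ * Real.cos (((m : ℝ) - 1) * α / 2))
    have hip : 0 < δ⁻¹ := inv_pos.mpr hδpos
    nlinarith
end

section
/- Let a > 1 be real, δ := a − √(a² − 1), η := −δ, and for m ≥ 1 let Q_m be the polynomial Q_m(t) := −2/(η − η⁻¹) + (4/(η − η⁻¹)) Σ_{j=0}^{m−1} ηʲ T_j(t) − (4 η^{m−1}/(η − η⁻¹)²) T_m(t), where T_j is the Chebyshev polynomial of the first kind of degree j. Then for all t ∈ [−1, 1], |1 − (t + a) Q_m(t)| ≤ δᵐ / (a − 1); equivalently, 1 − δᵐ/(a − 1) ≤ (t + a) Q_m(t) ≤ 1 + δᵐ/(a − 1). -/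
open Polynomial Polynomial.Chebyshev

private lemma sum_cos_formula (η θ : ℝ) (n : ℕ) :
    (1 - 2*η*Real.cos θ + η^2) * ∑ j ∈ Finset.range (n+1), η^j * Real.cos (j*θ)
      = 1 - η*Real.cos θ - η^(n+1)*Real.cos ((n+1)*θ) + η^(n+2)*Real.cos (n*θ) := by
  induction n with
  | zero => push_cast; simp; ring
  | succ n ih =>
    rw [Finset.sum_range_succ]
    have h2 : Real.cos (((n:ℝ)+2)*θ) = 2*Real.cos (((n:ℝ)+1)*θ)*Real.cos θ - Real.cos ((n:ℝ)*θ) := by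
      rw [show ((n:ℝ)+2)*θ = ((n:ℝ)+1)*θ + θ by ring, Real.cos_add,
        show ((n:ℝ))*θ = ((n:ℝ)+1)*θ - θ by ring, Real.cos_sub]
      ring
    push_cast
    push_cast at ih
    rw [show ((n:ℝ)+1+1) = ((n:ℝ)+2) by ring]
    linear_combination ih + η^(n+2) * h2

set_option maxHeartbeats 1000000 in
theorem best_approx_pointwise_relative_error (a : ℝ) (ha : 1 < a)
    (δ η : ℝ) (hδ : δ = a - Real.sqrt (a ^ 2 - 1)) (hη : η = -δ)
    (m : ℕ) (hm : 1 ≤ m)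
    (Qm : Polynomial ℝ)
    (hQm : Qm = C (-2 / (η - η⁻¹)) +
        C (4 / (η - η⁻¹)) * ∑ j ∈ Finset.range m, C (η ^ j) * T ℝ j -
        C (4 * η ^ (m - 1) / (η - η⁻¹) ^ 2) * T ℝ m) :
    ∀ t ∈ Set.Icc (-1 : ℝ) 1,
      |1 - (t + a) * Qm.eval t| ≤ δ ^ m / (a - 1) ∧
      1 - δ ^ m / (a - 1) ≤ (t + a) * Qm.eval t ∧
      (t + a) * Qm.eval t ≤ 1 + δ ^ m / (a - 1) := by
  obtain ⟨n, rfl⟩ : ∃ n, m = n + 1 := ⟨m - 1, (Nat.succ_pred_eq_of_pos hm).symm⟩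
  intro t ht
  obtain ⟨ht1, ht2⟩ := ht
  have hs2 : Real.sqrt (a ^ 2 - 1) ^ 2 = a ^ 2 - 1 := Real.sq_sqrt (by nlinarith)
  have hs_pos : 0 < Real.sqrt (a ^ 2 - 1) := Real.sqrt_pos.mpr (by nlinarith)
  have hδ_pos : 0 < δ := by
    have : Real.sqrt (a ^ 2 - 1) < a := by nlinarith
    rw [hδ]; linarith
  have hδ_lt1 : δ < 1 := by
    have h1 : (a - 1) ^ 2 < Real.sqrt (a ^ 2 - 1) ^ 2 := by nlinarith
    have h2 : a - 1 < Real.sqrt (a ^ 2 - 1) := by nlinarith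
    rw [hδ]; linarith
  have hrel : δ ^ 2 - 2 * a * δ + 1 = 0 := by
    rw [hδ]; linear_combination hs2
  have hδ0 : δ ≠ 0 := ne_of_gt hδ_pos
  have hη0 : η ≠ 0 := by rw [hη]; simpa using hδ0
  have h1δ : (0:ℝ) < 1 - δ ^ 2 := by nlinarith
  have hη2 : η ^ 2 = δ ^ 2 := by rw [hη]; ring
  have h1η : (1:ℝ) - η ^ 2 ≠ 0 := by rw [hη2]; exact ne_of_gt h1δ
  have ha2 : 2 * η * a = -(1 + η ^ 2) := by
    rw [hη]; linear_combination hrel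
  set θ : ℝ := Real.arccos t with hθ
  have hcos : Real.cos θ = t := Real.cos_arccos ht1 ht2
  set S : ℝ := ∑ j ∈ Finset.range (n+1), η ^ j * Real.cos ((j:ℝ) * θ) with hSdef
  set c0 : ℝ := Real.cos (((n:ℝ)+1) * θ) with hc0
  set c1 : ℝ := Real.cos ((n:ℝ) * θ) with hc1
  set c2 : ℝ := Real.cos (((n:ℝ)+2) * θ) with hc2def
  set ε : ℝ := η ^ n with hεdef
  have hε : |ε| = δ ^ n := by
    rw [hεdef, hη, abs_pow, abs_neg, abs_of_pos hδ_pos]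
  have hηabs : |η| = δ := by rw [hη, abs_neg, abs_of_pos hδ_pos]
  have heval : Qm.eval t = -2/(η - η⁻¹) + 4/(η - η⁻¹)*S - 4*ε/(η - η⁻¹)^2*c0 := by
    rw [hSdef, hc0, hεdef, hQm, ← hcos]
    simp only [eval_add, eval_sub, eval_mul, eval_C, eval_finset_sum, T_real_cos]
    push_cast
    simp only [Nat.add_sub_cancel]
  have hsum := sum_cos_formula η θ n
  rw [hcos] at hsum
  have hS : (1 - 2*η*t + η^2) * S = 1 - η*t - η*ε*c0 + η^2*ε*c1 := by
    rw [hSdef, hc0, hc1, hεdef]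
    linear_combination hsum
  have hc2 : c2 = 2*t*c0 - c1 := by
    rw [hc2def, hc0, hc1, ← hcos,
      show ((n:ℝ)+2)*θ = ((n:ℝ)+1)*θ + θ by ring, Real.cos_add,
      show ((n:ℝ))*θ = ((n:ℝ)+1)*θ - θ by ring, Real.cos_sub]
    ring
  have hKnum : η * (η - η⁻¹) = η^2 - 1 := by
    rw [mul_sub, mul_inv_cancel₀ hη0]; ring
  have hKne : η - η⁻¹ ≠ 0 := by
    intro h0
    have h' := hKnum
    rw [h0, mul_zero] at h'
    exact h1η (by linarith)
  have hη21 : η^2 - 1 ≠ 0 := fun h => h1η (by linarith only [h])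
  have hKval : η - η⁻¹ = (η^2-1)/η := by field_simp
  have hQK : (η - η⁻¹)^2 * Qm.eval t = -2*(η - η⁻¹) + 4*(η - η⁻¹)*S - 4*ε*c0 := by
    rw [heval, hKval]
    field_simp
  have hE2 : 2*η*(1-η^2)^2 * (1 - (t + a) * Qm.eval t)
      = 4*η^3*ε*(c2 - 2*η*c0 + η^2*c1) := by
    linear_combination
      (-(1-2*η*t+η^2)*(Qm.eval t)*(η*(η-η⁻¹)+η^2-1) + (1-2*η*t+η^2)*(-2*η+4*η*S)) * hKnum
      + ((1-2*η*t+η^2)*η^2) * hQK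
      + (4*η*(η^2-1)) * hS
      + (-(4*η^3*ε)) * hc2
      + (-(1-η^2)^2*(Qm.eval t)) * ha2
  have hbc0 : |c0| ≤ 1 := Real.abs_cos_le_one _
  have hbc1 : |c1| ≤ 1 := Real.abs_cos_le_one _
  have hbc2 : |c2| ≤ 1 := Real.abs_cos_le_one _
  rw [abs_le] at hbc0 hbc1 hbc2
  have p1 : δ*c0 ≤ δ*1 := mul_le_mul_of_nonneg_left hbc0.2 hδ_pos.le
  have p2 : δ*(-1) ≤ δ*c0 := mul_le_mul_of_nonneg_left hbc0.1 hδ_pos.le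
  have p3 : δ^2*c1 ≤ δ^2*1 := mul_le_mul_of_nonneg_left hbc1.2 (sq_nonneg δ)
  have p4 : δ^2*(-1) ≤ δ^2*c1 := mul_le_mul_of_nonneg_left hbc1.1 (sq_nonneg δ)
  have hbsum : |c2 - 2*η*c0 + η^2*c1| ≤ 1 + 2*δ + δ^2 := by
    rw [hη2, hη, abs_le]
    constructor
    · linarith only [hbc2.1, p2, p4]
    · linarith only [hbc2.2, p1, p3]
  have habsM : |2*η*(1-η^2)^2| = 2*δ*(1-δ^2)^2 := by
    rw [hη2, hη, show 2*(-δ)*(1-δ^2)^2 = -(2*δ*(1-δ^2)^2) by ring, abs_neg,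
      abs_of_nonneg (mul_nonneg (by linarith only [hδ_pos]) (sq_nonneg (1-δ^2)))]
  have habsY : |4*η^3*ε| = 4*δ^3*δ^n := by
    rw [abs_mul, abs_mul, abs_pow, hηabs, hε, abs_of_nonneg (by norm_num : (0:ℝ) ≤ 4)]
  have h1m : (1:ℝ) - δ ≠ 0 := ne_of_gt (by linarith)
  have ha1 : a - 1 = (1 - δ)^2 / (2*δ) := by
    field_simp
    linear_combination -hrel
  have ha1pos : 0 < a - 1 := by linarith only [ha]
  have hfinal : 4*δ^3*δ^n*(1+2*δ+δ^2) = 2*δ*(1-δ^2)^2 * (δ^(n+1)/(a-1)) := by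
    rw [ha1]
    field_simp
    ring
  have hMpos : 0 < 2*δ*(1-δ^2)^2 := mul_pos (by linarith) (pow_pos h1δ 2)
  have hchain : 2*δ*(1-δ^2)^2 * |1 - (t + a) * Qm.eval t|
      ≤ 2*δ*(1-δ^2)^2 * (δ^(n+1)/(a-1)) := by
    calc 2*δ*(1-δ^2)^2 * |1 - (t + a) * Qm.eval t|
        = |2*η*(1-η^2)^2 * (1 - (t + a) * Qm.eval t)| := by rw [abs_mul, habsM]
      _ = |4*η^3*ε| * |c2 - 2*η*c0 + η^2*c1| := by rw [hE2, abs_mul]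
      _ = 4*δ^3*δ^n * |c2 - 2*η*c0 + η^2*c1| := by rw [habsY]
      _ ≤ 4*δ^3*δ^n * (1+2*δ+δ^2) := by
          apply mul_le_mul_of_nonneg_left hbsum
          positivity
      _ = 2*δ*(1-δ^2)^2 * (δ^(n+1)/(a-1)) := by rw [← hfinal]
  have hEb : |1 - (t + a) * Qm.eval t| ≤ δ^(n+1)/(a-1) :=
    le_of_mul_le_mul_left hchain hMpos
  have habs := abs_le.mp hEb
  exact ⟨hEb, by linarith only [habs.1, habs.2], by linarith only [habs.1, habs.2]⟩
end

section
/- Let 0 < λ_min < λ_max < ∞, κ := λ_max/λ_min, a := (κ+1)/(κ−1), δ := (√κ − 1)/(√κ + 1), σ := 1/(λ_max − λ_min), and for m ≥ 1 let q_m(x) := 2σ Q_m(2σx − a), where Q_m is the polynomial of best uniform approximation to 1/(t+a) on [−1,1] by polynomials of degree at most m. If δᵐ (κ − 1) < 2, then q_m(x)·x > 0 for all x ∈ [λ_min, λ_max], and (max over x ∈ [λ_min,λ_max] of x·q_m(x)) / (min over x ∈ [λ_min,λ_max] of x·q_m(x)) ≤ (2 + δᵐ(κ − 1)) / (2 − δᵐ(κ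 − 1)). -/
/-!
After the affine change of variables t = 2σx − a one has x q_m(x) = (t + a) Q_m(t), so everything
follows from a bound on the best uniform error of 1/(t + a) on [−1, 1]. Since 2δa = 1 + δ², the
point −a equals (u + u⁻¹)/2 for u = −δ, where T_k takes the value (u^k + u^{−k})/2. Hence
1 − ε (T_{m+1} + 2δ T_m + δ² T_{m−1}) vanishes at −a for a suitable ε ∼ δ^{m+1}, so it equals
(t + a) Q(t) with deg Q ≤ m. On t = cos θ the bracket is the real part of e^{i(m−1)θ}(e^{iθ} + δ)²,
hence bounded by 1 + 2δt + δ² = 2δ(t + a); this bounds the error of Q, hence that of Q_m, by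
4δ^{m+2}/(1 − δ²)². Multiplying by t + a ≤ a + 1 gives |x q_m(x) − 1| ≤ δ^m(κ − 1)/2 on
[λ_min, λ_max], from which the positivity and the ratio bound follow.
-/

open Polynomial Real Set

namespace Polynomial.Chebyshev

theorem T_eval_half_add_inv_s17 {K : Type*} [Field K] [NeZero (2 : K)] {u : K} (hu : u ≠ 0)
    (n : ℤ) : (T K n).eval ((u + u⁻¹) / 2) = (u ^ n + u⁻¹ ^ n) / 2 := by
  induction n using Chebyshev.induct' with
  | zero => simp
  | one => simp
  | add_two n ih1 ih2 =>
    rw [T_add_two, eval_sub, eval_mul, eval_mul, eval_X, eval_ofNat, ih1, ih2]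
    simp only [zpow_add₀ hu, zpow_add₀ (inv_ne_zero hu), zpow_ofNat]
    field_simp
    ring
  | neg n ih => rw [T_neg, ih, inv_zpow', inv_zpow', neg_neg, add_comm]

end Polynomial.Chebyshev

theorem abs_cos_add_add_sq_mul_cos_sub_le (d θ φ : ℝ) :
    |cos (φ + θ) + 2 * d * cos φ + d ^ 2 * cos (φ - θ)| ≤ 1 + 2 * d * cos θ + d ^ 2 := by
  rw [cos_add, cos_sub]
  have h1 := sin_sq_add_cos_sq φ
  have h2 := sin_sq_add_cos_sq θ
  have hR : 0 ≤ 1 + 2 * d * cos θ + d ^ 2 := by nlinarith [sq_nonneg (cos θ + d)]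
  -- Cauchy–Schwarz: the left side is `A cos φ - B sin φ` with `A² + B² = (1 + 2d cos θ + d²)²`.
  have hsum : (((1 + d ^ 2) * cos θ + 2 * d) * cos φ - ((1 - d ^ 2) * sin θ) * sin φ) ^ 2
      + (((1 + d ^ 2) * cos θ + 2 * d) * sin φ + ((1 - d ^ 2) * sin θ) * cos φ) ^ 2
      = (1 + 2 * d * cos θ + d ^ 2) ^ 2 := by
    linear_combination (((1 + d ^ 2) * cos θ + 2 * d) ^ 2 + ((1 - d ^ 2) * sin θ) ^ 2) * h1
      + (1 - d ^ 2) ^ 2 * h2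
  rw [abs_le]
  constructor <;>
    nlinarith [sq_nonneg (((1 + d ^ 2) * cos θ + 2 * d) * sin φ + ((1 - d ^ 2) * sin θ) * cos φ)]

/-- At `cos θ` this is the real part of `e^{i(m-1)θ} (e^{iθ} + d)²`. -/
noncomputable def chebCombSq (d : ℝ) (m : ℤ) : ℝ[X] :=
  Chebyshev.T ℝ (m + 1) + C (2 * d) * Chebyshev.T ℝ m + C (d ^ 2) * Chebyshev.T ℝ (m - 1)

theorem natDegree_chebCombSq_le (d : ℝ) (m : ℕ) : (chebCombSq d m).natDegree ≤ m + 1 := by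
  have hT : ∀ k : ℤ, k.natAbs ≤ m + 1 → (Chebyshev.T ℝ k).natDegree ≤ m + 1 := fun k hk => by
    rwa [Chebyshev.natDegree_T]
  have hCT : ∀ (c : ℝ) (k : ℤ), k.natAbs ≤ m + 1 → (C c * Chebyshev.T ℝ k).natDegree ≤ m + 1 :=
    fun c k hk => (natDegree_C_mul_le _ _).trans (hT k hk)
  unfold chebCombSq
  refine natDegree_add_le_of_degree_le (natDegree_add_le_of_degree_le ?_ ?_) ?_
  · exact hT _ (by omega)
  · exact hCT _ _ (by omega)
  · exact hCT _ _ (by omega)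

theorem abs_eval_chebCombSq_le (d : ℝ) (m : ℤ) {t : ℝ} (ht : t ∈ Icc (-1) 1) :
    |(chebCombSq d m).eval t| ≤ 1 + 2 * d * t + d ^ 2 := by
  obtain ⟨θ, rfl⟩ : ∃ θ, cos θ = t := ⟨arccos t, cos_arccos ht.1 ht.2⟩
  have h := abs_cos_add_add_sq_mul_cos_sub_le d θ (m * θ)
  simp only [chebCombSq, eval_add, eval_mul, eval_C, Chebyshev.T_real_cos]
  push_cast
  convert h using 5 <;> ring

theorem eval_chebCombSq_neg_half_add_inv {d : ℝ} (hd : d ≠ 0) (m : ℤ) :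
    (chebCombSq d m).eval (-((d + d⁻¹) / 2)) = (-d)⁻¹ ^ (m + 1) * (1 - d ^ 2) ^ 2 / 2 := by
  have hu : -d ≠ 0 := neg_ne_zero.mpr hd
  have hx : -((d + d⁻¹) / 2) = (-d + (-d)⁻¹) / 2 := by rw [inv_neg]; ring
  simp only [chebCombSq, eval_add, eval_mul, eval_C, hx, Chebyshev.T_eval_half_add_inv_s17 hu,
    zpow_add₀ hu, zpow_sub₀ hu, zpow_add₀ (inv_ne_zero hu), zpow_sub₀ (inv_ne_zero hu), zpow_one,
    inv_zpow]
  field_simp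
  ring

theorem isRoot_one_sub_C_mul_chebCombSq {d a : ℝ} (hd : d ≠ 0) (hd2 : 1 - d ^ 2 ≠ 0)
    (ha : 2 * d * a = 1 + d ^ 2) (m : ℕ) :
    (1 - C (2 * (-d) ^ (m + 1) / (1 - d ^ 2) ^ 2) * chebCombSq d m).IsRoot (-a) := by
  have ha' : a = (d + d⁻¹) / 2 := by field_simp; linarith
  have hpow : (-d)⁻¹ ^ ((m : ℤ) + 1) = ((-d) ^ (m + 1))⁻¹ := by
    rw [inv_zpow, ← Nat.cast_succ, zpow_natCast]
  have hne : (-d) ^ (m + 1) ≠ 0 := pow_ne_zero _ (neg_ne_zero.mpr hd)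
  simp only [IsRoot, ha', eval_sub, eval_one, eval_mul, eval_C,
    eval_chebCombSq_neg_half_add_inv hd, hpow]
  field_simp
  ring

theorem exists_degree_le_abs_inv_sub_eval_le {d a : ℝ} (hd0 : 0 < d) (hd1 : d < 1)
    (ha : 2 * d * a = 1 + d ^ 2) (m : ℕ) :
    ∃ Q : ℝ[X], Q.degree ≤ m ∧
      ∀ t ∈ Icc (-1 : ℝ) 1, |1 / (t + a) - Q.eval t| ≤ 4 * d ^ (m + 2) / (1 - d ^ 2) ^ 2 := by
  have hd2 : 0 < 1 - d ^ 2 := by nlinarith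
  have ha1 : 1 < a := by nlinarith [sq_pos_of_pos (sub_pos.mpr hd1)]
  set ε := 2 * (-d) ^ (m + 1) / (1 - d ^ 2) ^ 2
  set N := 1 - C ε * chebCombSq d m
  have hroot : N.IsRoot (-a) := isRoot_one_sub_C_mul_chebCombSq hd0.ne' hd2.ne' ha m
  refine ⟨N /ₘ (X - C (-a)), degree_le_of_natDegree_le ?_, fun t ht => ?_⟩
  · have hN : N.natDegree ≤ m + 1 := (natDegree_sub_le _ _).trans
      (max_le (by simp) ((natDegree_C_mul_le ε _).trans (natDegree_chebCombSq_le d m)))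
    rw [natDegree_divByMonic _ (monic_X_sub_C _), natDegree_X_sub_C]
    omega
  have hta : 0 < t + a := by linarith [ht.1]
  have hN : (t + a) * (N /ₘ (X - C (-a))).eval t = 1 - ε * (chebCombSq d m).eval t := by
    simpa [N] using congrArg (eval t) (mul_divByMonic_eq_iff_isRoot.mpr hroot)
  have herr : 1 / (t + a) - (N /ₘ (X - C (-a))).eval t
      = ε * (chebCombSq d m).eval t / (t + a) := by
    field_simp
    linear_combination -hN
  have hε : |ε| = 2 * d ^ (m + 1) / (1 - d ^ 2) ^ 2 := by
    simp [ε, abs_div, abs_mul, abs_pow, abs_of_pos hd0]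
  calc |1 / (t + a) - (N /ₘ (X - C (-a))).eval t|
      = |ε| * |(chebCombSq d m).eval t| / (t + a) := by
        rw [herr, abs_div, abs_mul, abs_of_pos hta]
    _ ≤ |ε| * (2 * d * (t + a)) / (t + a) := by
        gcongr; linarith [abs_eval_chebCombSq_le d m ht]
    _ = 4 * d ^ (m + 2) / (1 - d ^ 2) ^ 2 := by
        rw [hε]; field_simp; ring

theorem le_of_csSup_image_le {α β : Type*} [ConditionallyCompleteLattice β] {f g : α → β}
    {s : Set α} {E : β} (hf : BddAbove (f '' s)) (hfg : sSup (f '' s) ≤ sSup (g '' s))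
    (hg : ∀ y ∈ s, g y ≤ E) {x : α} (hx : x ∈ s) : f x ≤ E :=
  (le_csSup hf (mem_image_of_mem f hx)).trans
    (hfg.trans (csSup_le ⟨_, mem_image_of_mem g hx⟩ (forall_mem_image.2 hg)))

theorem csSup_div_csInf_image_le {α : Type*} {s : Set α} (hs : s.Nonempty) {f : α → ℝ}
    {c : ℝ} (hc : c < 1) (hf : ∀ x ∈ s, |f x - 1| ≤ c) :
    sSup (f '' s) / sInf (f '' s) ≤ (1 + c) / (1 - c) := by
  have hc0 : 0 ≤ c := (abs_nonneg _).trans (hf _ hs.some_mem)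
  have hsup : sSup (f '' s) ≤ 1 + c :=
    csSup_le (hs.image f) (forall_mem_image.2 fun x hx => by linarith [(abs_le.1 (hf x hx)).2])
  have hinf : 1 - c ≤ sInf (f '' s) :=
    le_csInf (hs.image f) (forall_mem_image.2 fun x hx => by linarith [(abs_le.1 (hf x hx)).1])
  exact div_le_div₀ (by linarith) hsup (by linarith) hinf

theorem abs_mul_sub_one_le_of_abs_inv_sub_le {u v B E : ℝ} (hu : 0 < u) (huB : u ≤ B)
    (h : |1 / u - v| ≤ E) : |u * v - 1| ≤ B * E := by
  have : u * v - 1 = -(u * (1 / u - v)) := by field_simp; ring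
  rw [this, abs_neg, abs_mul, abs_of_pos hu]
  exact mul_le_mul huB h (abs_nonneg _) (hu.le.trans huB)

theorem condition_number_relations {κ a δ : ℝ} (hκ : 1 < κ) (ha : a = (κ + 1) / (κ - 1))
    (hδ : δ = (√κ - 1) / (√κ + 1)) :
    0 < δ ∧ δ < 1 ∧ 2 * δ * a = 1 + δ ^ 2 ∧ (κ - 1) * (1 - δ) ^ 2 = 4 * δ := by
  have hs : 1 < √κ := (Real.lt_sqrt zero_le_one).2 (by linarith)
  have hsq : √κ ^ 2 = κ := sq_sqrt (by linarith)
  have hκδ : (κ - 1) * (1 - δ) ^ 2 = 4 * δ := by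
    rw [hδ]; nth_rw 1 [← hsq]; field_simp; ring
  refine ⟨hδ ▸ div_pos (by linarith) (by linarith),
    hδ ▸ (div_lt_one (by linarith)).2 (by linarith), ?_, hκδ⟩
  rw [ha]; field_simp [(sub_pos.2 hκ).ne']; linear_combination -hκδ

theorem add_one_mul_error_bound_eq {κ a δ : ℝ} (m : ℕ) (hδ : δ ≠ -1)
    (ha : 2 * δ * a = 1 + δ ^ 2) (hκ : (κ - 1) * (1 - δ) ^ 2 = 4 * δ) :
    (a + 1) * (4 * δ ^ (m + 2) / (1 - δ ^ 2) ^ 2) = δ ^ m * (κ - 1) / 2 := by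
  have h0 : δ ≠ 0 := by rintro rfl; norm_num at ha
  have h1 : 1 - δ ≠ 0 := by intro h; rw [h] at hκ; exact h0 (by linarith)
  have h2 : 1 + δ ≠ 0 := fun h => hδ (by linarith)
  rw [show a = (1 + δ ^ 2) / (2 * δ) by field_simp; linarith,
    show κ - 1 = 4 * δ / (1 - δ) ^ 2 by field_simp; linarith,
    show 1 - δ ^ 2 = (1 - δ) * (1 + δ) by ring]
  field_simp
  ring

theorem affine_mem_Icc_neg_one_one {lmin lmax σ a x : ℝ} (hlt : lmin < lmax)
    (hσ : σ = 1 / (lmax - lmin)) (ha : a = (lmax + lmin) / (lmax - lmin))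
    (hx : x ∈ Icc lmin lmax) : 2 * σ * x - a ∈ Icc (-1) 1 := by
  have hl : 0 < lmax - lmin := sub_pos.2 hlt
  have : 2 * σ * x - a = (2 * x - lmax - lmin) / (lmax - lmin) := by
    rw [hσ, ha]; field_simp; ring
  rw [this, mem_Icc, le_div_iff₀ hl, div_le_iff₀ hl]
  constructor <;> linarith [hx.1, hx.2]

theorem amli_best_approx_condition_bound_general (lmin lmax : ℝ)
    (hlmin : 0 < lmin) (hlt : lmin < lmax)
    (κ a δ σ : ℝ) (hκ : κ = lmax / lmin) (ha : a = (κ + 1) / (κ - 1))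
    (hδ : δ = (Real.sqrt κ - 1) / (Real.sqrt κ + 1))
    (hσ : σ = 1 / (lmax - lmin))
    (m : ℕ)
    (Qm : Polynomial ℝ)
    (hQmbest : ∀ Q : Polynomial ℝ, Q.degree ≤ (m : ℕ) →
      sSup ((fun t : ℝ => |1 / (t + a) - Qm.eval t|) '' Set.Icc (-1 : ℝ) 1) ≤
        sSup ((fun t : ℝ => |1 / (t + a) - Q.eval t|) '' Set.Icc (-1 : ℝ) 1))
    (qm : Polynomial ℝ)
    (hqm : qm = C (2 * σ) * Qm.comp (C (2 * σ) * X - C a))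
    (hsmall : δ ^ m * (κ - 1) < 2) :
    (∀ x ∈ Set.Icc lmin lmax, 0 < qm.eval x * x) ∧
    sSup ((fun x : ℝ => x * qm.eval x) '' Set.Icc lmin lmax) /
      sInf ((fun x : ℝ => x * qm.eval x) '' Set.Icc lmin lmax) ≤
      (2 + δ ^ m * (κ - 1)) / (2 - δ ^ m * (κ - 1)) := by
  have hκ1 : 1 < κ := hκ ▸ (one_lt_div hlmin).2 hlt
  obtain ⟨hδ0, hδ1, haδ, hκδ⟩ := condition_number_relations hκ1 ha hδ
  have ha1 : 1 < a := by nlinarith [sq_pos_of_pos (sub_pos.2 hδ1)]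
  have ha' : a = (lmax + lmin) / (lmax - lmin) := by
    rw [ha, hκ]; field_simp [hlmin.ne', (sub_pos.2 hlt).ne']
  obtain ⟨Q, hQdeg, hQ⟩ := exists_degree_le_abs_inv_sub_eval_le hδ0 hδ1 haδ m
  have hbdd : BddAbove ((fun t : ℝ => |1 / (t + a) - Qm.eval t|) '' Icc (-1 : ℝ) 1) :=
    isCompact_Icc.bddAbove_image (by fun_prop (disch := intro t ht; linarith [ht.1]))
  have hpt : ∀ x ∈ Icc lmin lmax, |x * qm.eval x - 1| ≤ δ ^ m * (κ - 1) / 2 := by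
    intro x hx
    have ht := affine_mem_Icc_neg_one_one hlt hσ ha' hx
    have hxq : x * qm.eval x = (2 * σ * x - a + a) * Qm.eval (2 * σ * x - a) := by
      simp only [hqm, eval_mul, eval_C, eval_comp, eval_sub, eval_X, sub_add_cancel]
      ring
    rw [hxq, ← add_one_mul_error_bound_eq m (by linarith) haδ hκδ]
    exact abs_mul_sub_one_le_of_abs_inv_sub_le (by linarith [ht.1]) (by linarith [ht.2])
      (le_of_csSup_image_le hbdd (hQmbest Q hQdeg) hQ ht)
  refine ⟨fun x hx => ?_, ?_⟩
  · rw [mul_comm]; linarith [(abs_le.1 (hpt x hx)).1]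
  · refine (csSup_div_csInf_image_le (nonempty_Icc.2 hlt.le) (by linarith) hpt).trans_eq ?_
    field_simp

theorem amli_best_approx_condition_bound (lmin lmax : ℝ)
    (hlmin : 0 < lmin) (hlt : lmin < lmax)
    (κ a δ σ : ℝ) (hκ : κ = lmax / lmin) (ha : a = (κ + 1) / (κ - 1))
    (hδ : δ = (Real.sqrt κ - 1) / (Real.sqrt κ + 1))
    (hσ : σ = 1 / (lmax - lmin))
    (m : ℕ) (hm : 1 ≤ m)
    (Qm : Polynomial ℝ) (hQmdeg : Qm.degree ≤ (m : ℕ))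
    (hQmbest : ∀ Q : Polynomial ℝ, Q.degree ≤ (m : ℕ) →
      sSup ((fun t : ℝ => |1 / (t + a) - Qm.eval t|) '' Set.Icc (-1 : ℝ) 1) ≤
        sSup ((fun t : ℝ => |1 / (t + a) - Q.eval t|) '' Set.Icc (-1 : ℝ) 1))
    (qm : Polynomial ℝ)
    (hqm : qm = C (2 * σ) * Qm.comp (C (2 * σ) * X - C a))
    (hsmall : δ ^ m * (κ - 1) < 2) :
    (∀ x ∈ Set.Icc lmin lmax, 0 < qm.eval x * x) ∧
    sSup ((fun x : ℝ => x * qm.eval x) '' Set.Icc lmin lmax) /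
      sInf ((fun x : ℝ => x * qm.eval x) '' Set.Icc lmin lmax) ≤
      (2 + δ ^ m * (κ - 1)) / (2 - δ ^ m * (κ - 1)) :=
  amli_best_approx_condition_bound_general lmin lmax hlmin hlt κ a δ σ hκ ha hδ hσ m Qm hQmbest qm
    hqm hsmall
end

section
/- Let μ > 1, a := (μ+1)/(μ−1), δ := (√μ − 1)/(√μ + 1), η := −δ, and for m ≥ 1 let Q_m be the polynomial of best uniform approximation to 1/(t+a) on [−1,1] by polynomials of degree at most m, given by Q_m(t) := −2/(η − η⁻¹) + (4/(η − η⁻¹)) Σ_{j=0}^{m−1} ηʲ T_j(t) − (4 η^{m−1}/(η − η⁻¹)²) T_m(t). If ((√μ − 1)/(√μ + 1))ᵐ < 2/(μ − 1), then (t + a)·Q_m(t) > 0 for all t ∈ [−1, 1]. -/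
open Polynomial Polynomial.Chebyshev

/-!
Put `η = -δ`, so that `a = -(η + η⁻¹) / 2`. Summed against `ηʲ`, the recurrence
`2 t T_j = T_{j+1} + T_{j-1}` telescopes, and
`(t + a) Q_m(t) = 1 - 2 η^(m+1) / (1 - η²)² · (T_{m+1} - 2η T_m + η² T_{m-1})(t)`.
On `[-1, 1]` every `|T_j| ≤ 1`, so the correction term is at most
`2 δ^(m+1) (1 + δ)² / (1 - δ²)² = 2 δ^(m+1) / (1 - δ)²`, and since `2 / (μ - 1) = (1 - δ)² / (2δ)`
the hypothesis says exactly that this bound is `< 1`.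
-/

theorem mul_sum_pow_mul_chebyshevT {R : Type*} [CommRing R] (η : R) (n : ℕ) :
    (2 * C η * X - C η ^ 2 - 1) * ∑ j ∈ Finset.range (n + 1), C (η ^ j) * T R j =
      C η ^ (n + 1) * T R (n + 1) - C η ^ (n + 2) * T R n + C η * X - 1 := by
  induction n with
  | zero =>
    simp only [zero_add, Finset.range_one, Finset.sum_singleton, map_pow, pow_zero, pow_one,
      Nat.cast_zero, T_zero, T_one, mul_one]
    ring
  | succ n ih =>
    rw [Finset.sum_range_succ, mul_add, ih, map_pow]
    push_cast
    rw [show (n : ℤ) + 1 + 1 = n + 2 by ring]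
    linear_combination (-C η ^ (n + 2)) * T_add_two R n

/-- The best uniform approximation on `[-1, 1]` to `1 / (t - (η + η⁻¹) / 2)` by polynomials of
degree `≤ m`. -/
noncomputable def invBestApprox {F : Type*} [Field F] (η : F) (m : ℕ) : F[X] :=
  Polynomial.C (-2 / (η - η⁻¹)) +
      Polynomial.C (4 / (η - η⁻¹)) * ∑ j ∈ Finset.range m, Polynomial.C (η ^ j) * T F j -
    Polynomial.C (4 * η ^ (m - 1) / (η - η⁻¹) ^ 2) * T F m

theorem eval_mul_invBestApprox {F : Type*} [Field F] {η : F} (h2 : (2 : F) ≠ 0) (hη : η ≠ 0)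
    (hη1 : η ^ 2 ≠ 1) (n : ℕ) (t : F) :
    (t - (η + η⁻¹) / 2) * (invBestApprox η (n + 1)).eval t =
      1 - 2 * η ^ (n + 2) / (1 - η ^ 2) ^ 2 *
        ((T F (n + 2)).eval t - 2 * η * (T F (n + 1)).eval t + η ^ 2 * (T F n).eval t) := by
  have hsum := congrArg (eval t) (mul_sum_pow_mul_chebyshevT η n)
  have hrec := congrArg (eval t) (T_add_two F n)
  simp only [eval_mul, eval_sub, eval_add, eval_pow, eval_C, eval_X, eval_one, eval_ofNat,
    eval_finsetSum] at hsum hrec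
  have hd : η ^ 2 - 1 ≠ 0 := sub_ne_zero.mpr hη1
  have hdiff : η - η⁻¹ = (η ^ 2 - 1) / η := by field_simp
  simp only [invBestApprox, eval_mul, eval_sub, eval_add, eval_C, eval_finsetSum,
    Nat.add_sub_cancel]
  push_cast at hsum hrec ⊢
  rw [hdiff]
  linear_combination (norm := skip) (2 / (η ^ 2 - 1)) * hsum +
    (2 * η ^ (n + 2) / (η ^ 2 - 1) ^ 2) * hrec
  field_simp
  ring

theorem abs_eval_T_add_two_sub_add_le (η : ℝ) (n : ℕ) {t : ℝ} (ht : |t| ≤ 1) :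
    |(T ℝ (n + 2)).eval t - 2 * η * (T ℝ (n + 1)).eval t + η ^ 2 * (T ℝ n).eval t| ≤
      (1 + |η|) ^ 2 := by
  have hT (k : ℤ) := abs_eval_T_real_le_one k ht
  calc _ ≤ |(T ℝ (n + 2)).eval t| + 2 * |η| * |(T ℝ (n + 1)).eval t| +
        |η| ^ 2 * |(T ℝ n).eval t| := by
        refine (abs_add_le _ _).trans (add_le_add ((abs_sub _ _).trans_eq ?_) ?_)
        · simp only [abs_mul, abs_two]
        · simp only [abs_mul, abs_pow, le_refl]
    _ ≤ 1 + 2 * |η| * 1 + |η| ^ 2 * 1 := by gcongr <;> exact hT _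
    _ = (1 + |η|) ^ 2 := by ring

theorem two_div_sq_sub_one_eq {r : ℝ} (hr : 1 < r) :
    2 / (r ^ 2 - 1) = (1 - (r - 1) / (r + 1)) ^ 2 / (2 * ((r - 1) / (r + 1))) := by
  have : r - 1 ≠ 0 := by linarith
  have : r ^ 2 - 1 ≠ 0 := by nlinarith
  field_simp
  ring

theorem sq_add_one_div_sq_sub_one_eq {r : ℝ} (hr : 1 < r) :
    (r ^ 2 + 1) / (r ^ 2 - 1) = ((r - 1) / (r + 1) + ((r - 1) / (r + 1))⁻¹) / 2 := by
  have : r - 1 ≠ 0 := by linarith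
  have : r ^ 2 - 1 ≠ 0 := by nlinarith
  field_simp
  ring

theorem eval_mul_invBestApprox_pos {η : ℝ} (hη : η ≠ 0) (hη1 : |η| < 1) {n : ℕ}
    (hrate : 2 * |η| ^ (n + 2) < (1 - |η|) ^ 2) {t : ℝ} (ht : |t| ≤ 1) :
    0 < (t - (η + η⁻¹) / 2) * (invBestApprox η (n + 1)).eval t := by
  have hsq : η ^ 2 ≠ 1 := by
    rw [← sq_abs]; exact (pow_lt_one₀ (abs_nonneg η) hη1 two_ne_zero).ne
  rw [eval_mul_invBestApprox two_ne_zero hη hsq, sub_pos]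
  set E := (T ℝ (n + 2)).eval t - 2 * η * (T ℝ (n + 1)).eval t + η ^ 2 * (T ℝ n).eval t
  have hfactor : (1 - η ^ 2) ^ 2 = (1 - |η|) ^ 2 * (1 + |η|) ^ 2 := by
    rw [← sq_abs η]; ring
  calc 2 * η ^ (n + 2) / (1 - η ^ 2) ^ 2 * E
      ≤ |2 * η ^ (n + 2) / (1 - η ^ 2) ^ 2 * E| := le_abs_self _
    _ = 2 * |η| ^ (n + 2) / (1 - η ^ 2) ^ 2 * |E| := by
        simp only [abs_mul, abs_div, abs_pow, abs_two, sq_abs]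
    _ ≤ 2 * |η| ^ (n + 2) / (1 - η ^ 2) ^ 2 * (1 + |η|) ^ 2 := by
        gcongr; exact abs_eval_T_add_two_sub_add_le η n ht
    _ = 2 * |η| ^ (n + 2) / (1 - |η|) ^ 2 := by
        rw [hfactor]; field_simp
    _ < 1 := (div_lt_one (by positivity)).mpr hrate

theorem smoother_positivity_condition (μ : ℝ) (hμ : 1 < μ)
    (a δ η : ℝ) (ha : a = (μ + 1) / (μ - 1))
    (hδ : δ = (Real.sqrt μ - 1) / (Real.sqrt μ + 1)) (hη : η = -δ)
    (m : ℕ) (hm : 1 ≤ m)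
    (Qm : Polynomial ℝ)
    (hQm : Qm = C (-2 / (η - η⁻¹)) +
        C (4 / (η - η⁻¹)) * ∑ j ∈ Finset.range m, C (η ^ j) * T ℝ j -
        C (4 * η ^ (m - 1) / (η - η⁻¹) ^ 2) * T ℝ m)
    (hcond : ((Real.sqrt μ - 1) / (Real.sqrt μ + 1)) ^ m < 2 / (μ - 1)) :
    ∀ t ∈ Set.Icc (-1 : ℝ) 1, 0 < (t + a) * Qm.eval t := by
  intro t ht
  obtain ⟨n, rfl⟩ : ∃ n, m = n + 1 := ⟨m - 1, by omega⟩
  obtain ⟨r, hr, rfl⟩ : ∃ r, 1 < r ∧ μ = r ^ 2 :=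
    ⟨√μ, Real.lt_sqrt_of_sq_lt (by simpa using hμ), (Real.sq_sqrt (by linarith)).symm⟩
  rw [Real.sqrt_sq (by linarith)] at hδ hcond
  rw [← hδ, two_div_sq_sub_one_eq hr, ← hδ] at hcond
  rw [sq_add_one_div_sq_sub_one_eq hr, ← hδ] at ha
  have hδ0 : 0 < δ := hδ ▸ div_pos (by linarith) (by linarith)
  have hδ1 : δ < 1 := hδ ▸ (div_lt_one (by linarith)).mpr (by linarith)
  have hrate : 2 * |η| ^ (n + 2) < (1 - |η|) ^ 2 := by
    rw [hη, abs_neg, abs_of_pos hδ0]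
    rw [lt_div_iff₀ (by positivity)] at hcond
    linear_combination hcond
  have hta : t + a = t - (η + η⁻¹) / 2 := by rw [ha, hη, inv_neg]; ring
  rw [hta, hQm]
  exact eval_mul_invBestApprox_pos (by simp [hη, hδ0.ne']) (by simpa [hη, abs_of_pos hδ0]) hrate
    (abs_le.mpr ht)
end

section
/- Let 0 < λ̄ and μ > 1, and let q_m(x) := 2σ Q_m(2σx − a) with σ := 1/(λ̄ − λ̄/μ) and a := (μ+1)/(μ−1), where Q_m is the polynomial of best uniform approximation to 1/(t+a) on [−1,1] by polynomials of degree at most m ≥ 1. Let A be a real symmetric N×N matrix all of whose eigenvalues lie in the interval [λ̄/μ, λ̄]. Then the spectral radius of I − q_m(A)·A satisfies ρ(I − q_m(A) A) ≤ ((μ − 1)/2) · ((√μ − 1)/(√μ + 1))ᵐ. -/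
/-!
Put `ρ = (√μ - 1) / (√μ + 1)`, so that `a = (ρ + ρ⁻¹) / 2`. The Chebyshev combination
`W = T_{m+1} - 2ρ T_m + ρ² T_{m-1}` satisfies `|W(-t)| ≤ 1 + 2ρt + ρ² = 2ρ (t + a)` on
`[-1, 1]` (on `t = cos θ` it is the real part of a complex number of exactly that modulus),
and `W(a) = (1 - ρ²)² / (2ρ^{m+1})`. Hence `R(t) = W(-t) / W(a)` takes the value `1` at `-a`,
so `R = 1 - (t + a) Q` with `deg Q ≤ m`, and
`|1/(t + a) - Q(t)| = |R(t)| / (t + a) ≤ 4ρ^{m+2} / (1 - ρ²)²`.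
The best approximation `Q_m` does at least as well. The substitution `t = 2σx - a` maps
`[λ̄/μ, λ̄]` onto `[-1, 1]` and turns `1 - x q_m(x)` into `(t + a)(1/(t + a) - Q_m(t))`, which
is therefore at most `(1 + a) · 4ρ^{m+2} / (1 - ρ²)² = ((μ - 1)/2) ρ^m` in absolute value.
For a symmetric `A` the spectrum of `1 - q_m(A) A` is the image of the spectrum of `A` under
`x ↦ 1 - x q_m(x)`.
-/

open Polynomial Matrix

noncomputable def chebyshevTriple (r : ℝ) (n : ℤ) : ℝ[X] :=
  Chebyshev.T ℝ (n + 1) + C (2 * r) * Chebyshev.T ℝ n + C (r ^ 2) * Chebyshev.T ℝ (n - 1)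

theorem eval_chebyshevTriple (r : ℝ) (n : ℤ) (x : ℝ) :
    (chebyshevTriple r n).eval x = (Chebyshev.T ℝ (n + 1)).eval x +
      2 * r * (Chebyshev.T ℝ n).eval x + r ^ 2 * (Chebyshev.T ℝ (n - 1)).eval x := by
  simp only [chebyshevTriple, eval_add, eval_mul, eval_C]

theorem natDegree_chebyshevTriple_le (r : ℝ) (n : ℕ) :
    (chebyshevTriple r n).natDegree ≤ n + 1 := by
  have hT (k : ℤ) (hk : k.natAbs ≤ n + 1) : (Chebyshev.T ℝ k).natDegree ≤ n + 1 :=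
    (Chebyshev.natDegree_T ℝ k).le.trans hk
  refine natDegree_add_le_of_degree_le (natDegree_add_le_of_degree_le (hT _ (by omega)) ?_) ?_
  · exact (natDegree_C_mul_le _ _).trans (hT _ (by omega))
  · exact (natDegree_C_mul_le _ _).trans (hT _ (by omega))

theorem abs_mul_cos_sub_mul_sin_le (u v α : ℝ) :
    |u * Real.cos α - v * Real.sin α| ≤ √(u ^ 2 + v ^ 2) :=
  Real.abs_le_sqrt <| by
    nlinarith [sq_nonneg (u * Real.sin α + v * Real.cos α), Real.sin_sq_add_cos_sq α]

theorem abs_eval_chebyshevTriple_le (r : ℝ) (n : ℤ) {t : ℝ} (ht : t ∈ Set.Icc (-1 : ℝ) 1) :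
    |(chebyshevTriple r n).eval t| ≤ 1 + 2 * r * t + r ^ 2 := by
  obtain ⟨θ, rfl⟩ : ∃ θ, Real.cos θ = t := ⟨Real.arccos t, Real.cos_arccos ht.1 ht.2⟩
  have hcos (k : ℤ) : (Chebyshev.T ℝ k).eval (Real.cos θ) = Real.cos (k * θ) :=
    Chebyshev.T_real_cos θ k
  have hexpand : (chebyshevTriple r n).eval (Real.cos θ) =
      ((1 + r ^ 2) * Real.cos θ + 2 * r) * Real.cos (n * θ) -
        (1 - r ^ 2) * Real.sin θ * Real.sin (n * θ) := by
    rw [eval_chebyshevTriple, hcos, hcos, hcos]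
    push_cast
    rw [add_mul, sub_mul, one_mul, Real.cos_add, Real.cos_sub]
    ring
  have hsq : ((1 + r ^ 2) * Real.cos θ + 2 * r) ^ 2 + ((1 - r ^ 2) * Real.sin θ) ^ 2 =
      (1 + 2 * r * Real.cos θ + r ^ 2) ^ 2 := by
    linear_combination (1 - r ^ 2) ^ 2 * Real.sin_sq_add_cos_sq θ
  have hnonneg : 0 ≤ 1 + 2 * r * Real.cos θ + r ^ 2 := by
    nlinarith [sq_nonneg (r + Real.cos θ), Real.sin_sq_add_cos_sq θ, sq_nonneg (Real.sin θ)]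
  rw [hexpand]
  exact (abs_mul_cos_sub_mul_sin_le _ _ _).trans_eq (by rw [hsq, Real.sqrt_sq hnonneg])

theorem Polynomial.Chebyshev.T_eval_half_add_inv_s19 {ρ : ℝ} (hρ : 0 < ρ) (n : ℤ) :
    (Chebyshev.T ℝ n).eval ((ρ + ρ⁻¹) / 2) = (ρ ^ n + ρ ^ (-n)) / 2 := by
  rw [← Real.cosh_log hρ, Chebyshev.T_real_cosh, Real.cosh_eq, ← neg_mul, mul_comm,
    mul_comm (-(n : ℝ)), ← Real.rpow_def_of_pos hρ, ← Real.rpow_def_of_pos hρ, ← Int.cast_neg,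
    Real.rpow_intCast, Real.rpow_intCast]

theorem eval_chebyshevTriple_neg_half_add_inv {ρ : ℝ} (hρ : 0 < ρ) (n : ℤ) :
    (chebyshevTriple (-ρ) n).eval ((ρ + ρ⁻¹) / 2) = (1 - ρ ^ 2) ^ 2 / (2 * ρ ^ (n + 1)) := by
  have h0 : ρ ≠ 0 := hρ.ne'
  simp only [eval_chebyshevTriple, Chebyshev.T_eval_half_add_inv_s19 hρ, neg_add, neg_sub,
    zpow_add₀ h0, zpow_sub₀ h0, _root_.zpow_neg, zpow_one]
  field_simp
  ring

theorem exists_degree_le_one_div_sub_eval_eq {K : Type*} [Field K] (a : K) {R : K[X]} {m : ℕ}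
    (hR : R.eval (-a) = 1) (hdeg : R.natDegree ≤ m + 1) :
    ∃ Q : K[X], Q.degree ≤ m ∧ ∀ t, t + a ≠ 0 → 1 / (t + a) - Q.eval t = R.eval t / (t + a) := by
  have hroot : (1 - R).IsRoot (-a) := by simp [hR]
  refine ⟨(1 - R) /ₘ (X - C (-a)), degree_le_of_natDegree_le ?_, fun t ht => ?_⟩
  · rw [natDegree_divByMonic _ (monic_X_sub_C _), natDegree_X_sub_C]
    have := natDegree_sub_le (1 : K[X]) R
    rw [natDegree_one] at this
    omega
  · have hfac := congrArg (eval t) (mul_divByMonic_eq_iff_isRoot.mpr hroot)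
    simp only [eval_mul, eval_sub, eval_X, eval_C, eval_one, sub_neg_eq_add] at hfac
    field_simp
    linear_combination -hfac

section ApproximationOfInverse

variable {ρ a : ℝ}

theorem one_lt_of_two_mul_mul_eq (hρ0 : 0 < ρ) (hρ1 : ρ < 1) (ha : 2 * ρ * a = 1 + ρ ^ 2) :
    1 < a := by
  nlinarith [mul_pos hρ0 (sub_pos.2 hρ1)]

theorem exists_degree_le_abs_one_div_sub_eval_le (hρ0 : 0 < ρ) (hρ1 : ρ < 1)
    (ha : 2 * ρ * a = 1 + ρ ^ 2) (m : ℕ) :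
    ∃ Q : ℝ[X], Q.degree ≤ m ∧
      ∀ t ∈ Set.Icc (-1 : ℝ) 1, |1 / (t + a) - Q.eval t| ≤ 4 * ρ ^ (m + 2) / (1 - ρ ^ 2) ^ 2 := by
  have haρ : a = (ρ + ρ⁻¹) / 2 := by field_simp; linarith
  have h1ρ2 : 0 < 1 - ρ ^ 2 := by nlinarith
  set c := 2 * ρ ^ (m + 1) / (1 - ρ ^ 2) ^ 2 with hc
  have hc0 : 0 < c := by positivity
  set R : ℝ[X] := C c * (chebyshevTriple (-ρ) m).comp (-X)
  have hReval (t : ℝ) : R.eval t = c * (chebyshevTriple (-ρ) m).eval (-t) := by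
    simp [R, eval_comp]
  have hRa : R.eval (-a) = 1 := by
    rw [hReval, neg_neg, haρ, eval_chebyshevTriple_neg_half_add_inv hρ0, hc]
    field_simp
    norm_cast
  have hRdeg : R.natDegree ≤ m + 1 :=
    (natDegree_C_mul_le _ _).trans <| natDegree_comp_le.trans <| by
      simpa using natDegree_chebyshevTriple_le (-ρ) m
  obtain ⟨Q, hQdeg, hQ⟩ := exists_degree_le_one_div_sub_eval_eq a hRa hRdeg
  refine ⟨Q, hQdeg, fun t ht => ?_⟩
  have hta : 0 < t + a := by linarith [ht.1, one_lt_of_two_mul_mul_eq hρ0 hρ1 ha]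
  have hbound :=
    abs_eval_chebyshevTriple_le (-ρ) m (t := -t) ⟨by linarith [ht.2], by linarith [ht.1]⟩
  rw [hQ t hta.ne', hReval, abs_div, abs_mul, abs_of_pos hc0, abs_of_pos hta, div_le_iff₀ hta]
  calc c * |(chebyshevTriple (-ρ) m).eval (-t)| ≤ c * (2 * ρ * (t + a)) := by
        gcongr
        linarith
    _ = 4 * ρ ^ (m + 2) / (1 - ρ ^ 2) ^ 2 * (t + a) := by
        rw [hc, pow_succ _ (m + 1)]
        ring

/-- For `a ∈ [-1, 1]` the set is unbounded and `sSup` returns the junk value `0`. -/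
noncomputable def invApproxError (a : ℝ) (Q : ℝ[X]) : ℝ :=
  sSup ((fun t : ℝ => |1 / (t + a) - Q.eval t|) '' Set.Icc (-1 : ℝ) 1)

theorem abs_one_div_sub_eval_le_invApproxError (ha : 1 < a) (Q : ℝ[X]) {t : ℝ}
    (ht : t ∈ Set.Icc (-1 : ℝ) 1) : |1 / (t + a) - Q.eval t| ≤ invApproxError a Q := by
  refine le_csSup (isCompact_Icc.bddAbove_image ?_) (Set.mem_image_of_mem _ ht)
  refine ContinuousOn.abs (ContinuousOn.sub ?_ Q.continuous.continuousOn)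
  exact continuousOn_const.div (by fun_prop) fun s hs => by linarith [hs.1]

variable {m : ℕ} {Qm : ℝ[X]}

theorem abs_one_div_sub_eval_le_of_isBest (hρ0 : 0 < ρ) (hρ1 : ρ < 1)
    (ha : 2 * ρ * a = 1 + ρ ^ 2)
    (hbest : ∀ Q : ℝ[X], Q.degree ≤ m → invApproxError a Qm ≤ invApproxError a Q)
    {t : ℝ} (ht : t ∈ Set.Icc (-1 : ℝ) 1) :
    |1 / (t + a) - Qm.eval t| ≤ 4 * ρ ^ (m + 2) / (1 - ρ ^ 2) ^ 2 := by
  obtain ⟨Q, hQdeg, hQ⟩ := exists_degree_le_abs_one_div_sub_eval_le hρ0 hρ1 ha m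
  calc |1 / (t + a) - Qm.eval t|
      ≤ invApproxError a Qm :=
        abs_one_div_sub_eval_le_invApproxError (one_lt_of_two_mul_mul_eq hρ0 hρ1 ha) Qm ht
    _ ≤ invApproxError a Q := hbest Q hQdeg
    _ ≤ _ := Real.sSup_le (by rintro _ ⟨s, hs, rfl⟩; exact hQ s hs) (by positivity)

theorem abs_one_sub_mul_eval_le_of_isBest (hρ0 : 0 < ρ) (hρ1 : ρ < 1)
    (ha : 2 * ρ * a = 1 + ρ ^ 2)
    (hbest : ∀ Q : ℝ[X], Q.degree ≤ m → invApproxError a Qm ≤ invApproxError a Q)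
    {t : ℝ} (ht : t ∈ Set.Icc (-1 : ℝ) 1) :
    |1 - (t + a) * Qm.eval t| ≤ 2 * ρ ^ (m + 1) / (1 - ρ) ^ 2 := by
  have hta : 0 < t + a := by linarith [ht.1, one_lt_of_two_mul_mul_eq hρ0 hρ1 ha]
  have h1ρ : 1 - ρ ≠ 0 := by linarith
  have h1ρ' : 1 + ρ ≠ 0 := by linarith
  calc |1 - (t + a) * Qm.eval t| = |t + a| * |1 / (t + a) - Qm.eval t| := by
        rw [← abs_mul, mul_sub, mul_one_div_cancel hta.ne']
    _ = (t + a) * |1 / (t + a) - Qm.eval t| := by rw [abs_of_pos hta]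
    _ ≤ (1 + a) * (4 * ρ ^ (m + 2) / (1 - ρ ^ 2) ^ 2) :=
        mul_le_mul (by linarith [ht.2]) (abs_one_div_sub_eval_le_of_isBest hρ0 hρ1 ha hbest ht)
          (abs_nonneg _) (by linarith [ht.2])
    _ = 2 * ρ ^ (m + 1) / (1 - ρ) ^ 2 := by
        rw [show a = (1 + ρ ^ 2) / (2 * ρ) by field_simp; linarith,
          show 1 - ρ ^ 2 = (1 - ρ) * (1 + ρ) by ring]
        field_simp
        ring

end ApproximationOfInverse

theorem IsSelfAdjoint.spectrum_aeval {A : Type*} [Ring A] [StarRing A] [Algebra ℝ A]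
    [TopologicalSpace A] [ContinuousFunctionalCalculus ℝ A IsSelfAdjoint] {a : A}
    (ha : IsSelfAdjoint a) (p : ℝ[X]) :
    spectrum ℝ (aeval a p) = (fun x => p.eval x) '' spectrum ℝ a := by
  rw [← cfc_polynomial p a, cfc_map_spectrum _ _]

theorem two_mul_sub_div_add_mul_eq_one_add_sq {s : ℝ} (hs : s ^ 2 ≠ 1) :
    2 * ((s - 1) / (s + 1)) * ((s ^ 2 + 1) / (s ^ 2 - 1)) = 1 + ((s - 1) / (s + 1)) ^ 2 := by
  have h1 : s ^ 2 - 1 ≠ 0 := sub_ne_zero.2 hs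
  have h2 : s + 1 ≠ 0 := fun h => hs (by rw [eq_neg_of_add_eq_zero_left h]; norm_num)
  field_simp
  ring

theorem sq_sub_one_div_two_eq {s : ℝ} (hs : s + 1 ≠ 0) :
    (s ^ 2 - 1) / 2 = 2 * ((s - 1) / (s + 1)) / (1 - (s - 1) / (s + 1)) ^ 2 := by
  rw [show 1 - (s - 1) / (s + 1) = 2 / (s + 1) by field_simp; ring]
  field_simp
  ring

theorem mem_Icc_neg_one_one_of_mem_Icc {lo hi x : ℝ} (hlt : lo < hi) (hx : x ∈ Set.Icc lo hi) :
    (2 * x - (hi + lo)) / (hi - lo) ∈ Set.Icc (-1 : ℝ) 1 := by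
  have hpos : 0 < hi - lo := sub_pos.2 hlt
  constructor
  · rw [le_div_iff₀ hpos]; linarith [hx.1]
  · rw [div_le_iff₀ hpos]; linarith [hx.2]

theorem abs_eval_one_sub_mul_X_le {lbar μ σ a : ℝ} (hlbar : 0 < lbar) (hμ : 1 < μ)
    (hσ : σ = 1 / (lbar - lbar / μ)) (ha : a = (μ + 1) / (μ - 1)) {m : ℕ} {Qm qm : ℝ[X]}
    (hbest : ∀ Q : ℝ[X], Q.degree ≤ m → invApproxError a Qm ≤ invApproxError a Q)
    (hqm : qm = C (2 * σ) * Qm.comp (C (2 * σ) * X - C a))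
    {x : ℝ} (hx : x ∈ Set.Icc (lbar / μ) lbar) :
    |(1 - qm * X).eval x| ≤ (μ - 1) / 2 * ((√μ - 1) / (√μ + 1)) ^ m := by
  obtain ⟨s, hs1, rfl⟩ : ∃ s, 1 < s ∧ s ^ 2 = μ :=
    ⟨√μ, Real.lt_sqrt zero_le_one |>.2 (by simpa using hμ), Real.sq_sqrt (by linarith)⟩
  have hs2 : s ^ 2 ≠ 1 := by nlinarith
  have ht : 2 * σ * x - a ∈ Set.Icc (-1 : ℝ) 1 := by
    convert mem_Icc_neg_one_one_of_mem_Icc (div_lt_self hlbar hμ) hx using 1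
    have : s ^ 2 - 1 ≠ 0 := sub_ne_zero.2 hs2
    rw [hσ, ha]
    field_simp
  have heval : (1 - qm * X).eval x = 1 - (2 * σ * x - a + a) * Qm.eval (2 * σ * x - a) := by
    simp only [hqm, eval_sub, eval_one, eval_mul, eval_C, eval_comp, eval_X, sub_add_cancel]
    ring
  have hbound := abs_one_sub_mul_eval_le_of_isBest (div_pos (by linarith) (by linarith))
    ((div_lt_one (by linarith)).2 (by linarith))
    (ha ▸ two_mul_sub_div_add_mul_eq_one_add_sq hs2) hbest ht
  rw [heval]
  convert hbound using 1
  rw [Real.sqrt_sq (by linarith), sq_sub_one_div_two_eq (by linarith), pow_succ']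
  ring

theorem smoother_damping_factor_general (N : ℕ) (lbar μ : ℝ)
    (hlbar : 0 < lbar) (hμ : 1 < μ)
    (σ a : ℝ) (hσ : σ = 1 / (lbar - lbar / μ)) (ha : a = (μ + 1) / (μ - 1))
    (m : ℕ)
    (Qm : Polynomial ℝ)
    (hQmbest : ∀ Q : Polynomial ℝ, Q.degree ≤ (m : ℕ) →
      sSup ((fun t : ℝ => |1 / (t + a) - Qm.eval t|) '' Set.Icc (-1 : ℝ) 1) ≤
        sSup ((fun t : ℝ => |1 / (t + a) - Q.eval t|) '' Set.Icc (-1 : ℝ) 1))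
    (qm : Polynomial ℝ)
    (hqm : qm = C (2 * σ) * Qm.comp (C (2 * σ) * X - C a))
    (A : Matrix (Fin N) (Fin N) ℝ) (hA : A.IsSymm)
    (hspec : ∀ x ∈ spectrum ℝ A, x ∈ Set.Icc (lbar / μ) lbar) :
    ∀ z ∈ spectrum ℝ (1 - aeval A qm * A),
      |z| ≤ ((μ - 1) / 2) * ((Real.sqrt μ - 1) / (Real.sqrt μ + 1)) ^ m := by
  intro z hz
  rw [show 1 - aeval A qm * A = aeval A (1 - qm * X) by simp,
    (isHermitian_iff_isSelfAdjoint.mp hA).spectrum_aeval] at hz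
  obtain ⟨x, hx, rfl⟩ := hz
  exact abs_eval_one_sub_mul_X_le hlbar hμ hσ ha hQmbest hqm (hspec x hx)

theorem smoother_damping_factor (N : ℕ) (lbar μ : ℝ)
    (hlbar : 0 < lbar) (hμ : 1 < μ)
    (σ a : ℝ) (hσ : σ = 1 / (lbar - lbar / μ)) (ha : a = (μ + 1) / (μ - 1))
    (m : ℕ) (hm : 1 ≤ m)
    (Qm : Polynomial ℝ) (hQmdeg : Qm.degree ≤ (m : ℕ))
    (hQmbest : ∀ Q : Polynomial ℝ, Q.degree ≤ (m : ℕ) →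
      sSup ((fun t : ℝ => |1 / (t + a) - Qm.eval t|) '' Set.Icc (-1 : ℝ) 1) ≤
        sSup ((fun t : ℝ => |1 / (t + a) - Q.eval t|) '' Set.Icc (-1 : ℝ) 1))
    (qm : Polynomial ℝ)
    (hqm : qm = C (2 * σ) * Qm.comp (C (2 * σ) * X - C a))
    (A : Matrix (Fin N) (Fin N) ℝ) (hA : A.IsSymm)
    (hspec : ∀ x ∈ spectrum ℝ A, x ∈ Set.Icc (lbar / μ) lbar) :
    ∀ z ∈ spectrum ℝ (1 - aeval A qm * A),
      |z| ≤ ((μ - 1) / 2) * ((Real.sqrt μ - 1) / (Real.sqrt μ + 1)) ^ m :=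
  smoother_damping_factor_general N lbar μ hlbar hμ σ a hσ ha m Qm hQmbest qm hqm A hA hspec
end
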